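/- arXiv:1907.12329 — 4 statements merged into one kernel-verified Lean document; each statement's English description precedes it below -/
import Mathlib

section
/- If m and n are positive integers with m ≡ 0 (mod 4) and n ≡ 0 (mod 4), then the graph K_m □ K_n has an L_8-decomposition. -/
open SimpleGraph

/-- The sunlet graph `L₈` on 8 vertices: a 4-cycle on vertices `0,1,2,3`
together with pendant vertices `4,5,6,7`, where pendant `i+4` is attached
to cycle vertex `i`. -/
def sunlet8 : SimpleGraph (Fin 8) :=
  SimpleGraph.fromRel (fun a b =>
    (a.val < 4 ∧ b.val < 4 ∧ b.val = (a.val + 1) % 4) ∨ (a.val < 4 ∧ b.val = a.val + 4))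

/-- A set of edges is a copy of the sunlet graph `L₈` if it is the image of the
edge set of `sunlet8` under an injective map of vertices. -/
def IsSunletCopy {V : Type*} (s : Set (Sym2 V)) : Prop :=
  ∃ f : Fin 8 → V, Function.Injective f ∧ s = Sym2.map f '' sunlet8.edgeSet

/-- A graph `G` has an `L₈`-decomposition if its edge set can be partitioned into
parts, each of which induces a subgraph isomorphic to the sunlet graph `L₈`. -/
def HasSunletDecomposition {V : Type*} (G : SimpleGraph V) : Prop :=
  ∃ P : Set (Set (Sym2 V)),
    ⋃₀ P = G.edgeSet ∧ P.PairwiseDisjoint id ∧ ∀ s ∈ P, IsSunletCopy s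

lemma copy_comp {V W : Type*} {s : Set (Sym2 W)} (h : IsSunletCopy s)
    {g : W → V} (hg : Function.Injective g) : IsSunletCopy (Sym2.map g '' s) := by
  obtain ⟨f, hf, rfl⟩ := h
  refine ⟨g ∘ f, hg.comp hf, ?_⟩
  rw [← Set.image_comp]
  have : Sym2.map g ∘ Sym2.map f = Sym2.map (g ∘ f) := funext fun x => Sym2.map_map x
  rw [this]

lemma glue {V : Type*} (G : SimpleGraph V) {I : Type*} {W : I → Type*}
    (H : ∀ i, SimpleGraph (W i)) (g : ∀ i, W i → V)
    (hginj : ∀ i, Function.Injective (g i))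
    (hdec : ∀ i, HasSunletDecomposition (H i))
    (hcov : G.edgeSet = ⋃ i, Sym2.map (g i) '' (H i).edgeSet)
    (hdisj : ∀ i j, i ≠ j →
      Disjoint (Sym2.map (g i) '' (H i).edgeSet) (Sym2.map (g j) '' (H j).edgeSet)) :
    HasSunletDecomposition G := by
  choose P hP1 hP2 hP3 using hdec
  refine ⟨⋃ i, (fun s => Sym2.map (g i) '' s) '' P i, ?_, ?_, ?_⟩
  · rw [Set.sUnion_iUnion, hcov]
    refine Set.iUnion_congr fun i => ?_
    rw [← Set.image_sUnion, hP1]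
  · rintro t ht t' ht' hne
    simp only [Set.mem_iUnion, Set.mem_image] at ht ht'
    obtain ⟨i, s, hs, rfl⟩ := ht
    obtain ⟨i', s', hs', rfl⟩ := ht'
    rcases eq_or_ne i i' with rfl | hii
    · have hss : s ≠ s' := fun h => hne (by rw [h])
      exact (Set.disjoint_image_iff (Sym2.map.injective (hginj i))).2 (hP2 i hs hs' hss)
    · refine Set.disjoint_of_subset ?_ ?_ (hdisj i i' hii)
      · exact Set.image_mono (by rw [← hP1 i]; exact Set.subset_sUnion_of_mem hs)
      · exact Set.image_mono (by rw [← hP1 i']; exact Set.subset_sUnion_of_mem hs')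
  · rintro t ht
    simp only [Set.mem_iUnion, Set.mem_image] at ht
    obtain ⟨i, s, hs, rfl⟩ := ht
    exact copy_comp (hP3 i s hs) (hginj i)

lemma sunletSelf : HasSunletDecomposition sunlet8 := by
  refine ⟨{sunlet8.edgeSet}, by simp, Set.pairwiseDisjoint_singleton _ _, ?_⟩
  rintro s rfl
  exact ⟨id, Function.injective_id, by simp [Sym2.map_id]⟩


def b44 : SimpleGraph (Fin 8) :=
  SimpleGraph.fromRel (fun a b => a.val < 4 ∧ 4 ≤ b.val)
def K44 : SimpleGraph (Fin 4 × Fin 4) := (⊤ : SimpleGraph (Fin 4)) □ (⊤ : SimpleGraph (Fin 4))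


instance : DecidableRel sunlet8.Adj :=
  fun a b => decidable_of_iff' _ (SimpleGraph.fromRel_adj _ a b)
instance : DecidableRel b44.Adj :=
  fun a b => decidable_of_iff' _ (SimpleGraph.fromRel_adj _ a b)
instance : DecidableRel K44.Adj :=
  fun a b => decidable_of_iff' _ SimpleGraph.boxProd_adj

def gB44 : Fin 2 → Fin 8 → Fin 8
  | 0 => ![0, 4, 1, 5, 6, 2, 7, 3]
  | 1 => ![2, 6, 3, 7, 5, 1, 4, 0]

def gK44 : Fin 6 → Fin 8 → Fin 4 × Fin 4
  | 0 => ![(0,0),(0,1),(0,2),(0,3),(1,0),(1,1),(1,2),(1,3)]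
  | 1 => ![(0,0),(0,2),(2,2),(2,0),(3,0),(3,2),(1,2),(1,0)]
  | 2 => ![(0,1),(0,3),(2,3),(2,1),(3,1),(3,3),(1,3),(1,1)]
  | 3 => ![(1,0),(1,1),(3,1),(3,0),(1,2),(1,3),(3,2),(3,3)]
  | 4 => ![(1,2),(1,3),(3,3),(3,2),(1,1),(1,0),(3,1),(3,0)]
  | 5 => ![(2,0),(2,1),(2,2),(2,3),(3,0),(3,1),(3,2),(3,3)]

set_option maxHeartbeats 1000000 in
lemma decB44 : HasSunletDecomposition b44 := by
  refine glue b44 (fun _ : Fin 2 => sunlet8) gB44 (by decide) (fun _ => sunletSelf) ?_ ?_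
  · ext e
    simp only [Set.mem_iUnion, Set.mem_image]
    revert e
    decide
  · have key : ∀ t t' : Fin 2, t ≠ t' → ∀ x ∈ sunlet8.edgeSet, ∀ x' ∈ sunlet8.edgeSet,
        Sym2.map (gB44 t) x ≠ Sym2.map (gB44 t') x' := by decide
    intro t t' hne
    rw [Set.disjoint_left]
    rintro e ⟨x, hx, rfl⟩ ⟨x', hx', hxx⟩
    exact key t t' hne x hx x' hx' hxx.symm

set_option maxHeartbeats 4000000 in
set_option maxRecDepth 10000 in
lemma decK44 : HasSunletDecomposition K44 := by
  refine glue K44 (fun _ : Fin 6 => sunlet8) gK44 (by decide) (fun _ => sunletSelf) ?_ ?_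
  · ext e
    simp only [Set.mem_iUnion, Set.mem_image]
    revert e
    decide
  · have key : ∀ t t' : Fin 6, t ≠ t' → ∀ x ∈ sunlet8.edgeSet, ∀ x' ∈ sunlet8.edgeSet,
        Sym2.map (gK44 t) x ≠ Sym2.map (gK44 t') x' := by decide
    intro t t' hne
    rw [Set.disjoint_left]
    rintro e ⟨x, hx, rfl⟩ ⟨x', hx', hxx⟩
    exact key t t' hne x hx x' hx' hxx.symm

section Emb
variable (a b : ℕ)
def embB (i : Fin a) (j : Fin b) (p : Fin 4 × Fin 4) : Fin (4*a) × Fin (4*b) :=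
  (⟨4*i.val+p.1.val, by have := i.isLt; have := p.1.isLt; omega⟩,
   ⟨4*j.val+p.2.val, by have := j.isLt; have := p.2.isLt; omega⟩)
def embR (r : Fin (4*a)) (j j' : Fin b) (k : Fin 8) : Fin (4*a) × Fin (4*b) :=
  (r, ⟨if k.val < 4 then 4*j.val+k.val else 4*j'.val+(k.val-4),
    by have := j.isLt; have := j'.isLt; have := k.isLt; split <;> omega⟩)
def embC (c : Fin (4*b)) (i i' : Fin a) (k : Fin 8) : Fin (4*a) × Fin (4*b) :=
  (⟨if k.val < 4 then 4*i.val+k.val else 4*i'.val+(k.val-4),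
    by have := i.isLt; have := i'.isLt; have := k.isLt; split <;> omega⟩, c)

lemma embB_inj (i : Fin a) (j : Fin b) : Function.Injective (embB a b i j) := by
  intro p q h
  rw [Prod.ext_iff] at h
  have h1 := congrArg Fin.val h.1
  have h2 := congrArg Fin.val h.2
  simp only [embB] at h1 h2
  exact Prod.ext (Fin.ext (by omega)) (Fin.ext (by omega))

lemma embR_inj (r : Fin (4*a)) (j j' : Fin b) (h : j.val < j'.val) :
    Function.Injective (embR a b r j j') := by
  intro k k' hkk
  have h2 := congrArg (fun x => (Prod.snd x).val) hkk
  simp only [embR] at h2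
  have := k.isLt; have := k'.isLt
  apply Fin.ext
  split at h2 <;> split at h2 <;> omega

lemma embC_inj (c : Fin (4*b)) (i i' : Fin a) (h : i.val < i'.val) :
    Function.Injective (embC a b c i i') := by
  intro k k' hkk
  have h2 := congrArg (fun x => (Prod.fst x).val) hkk
  simp only [embC] at h2
  have := k.isLt; have := k'.isLt
  apply Fin.ext
  split at h2 <;> split at h2 <;> omega

lemma memB_elim {i : Fin a} {j : Fin b} {e : Sym2 (Fin (4*a) × Fin (4*b))}
    (he : e ∈ Sym2.map (embB a b i j) '' K44.edgeSet) :
    ∃ u v : Fin (4*a) × Fin (4*b), e = s(u,v) ∧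
      u.1.val/4 = i.val ∧ u.2.val/4 = j.val ∧ v.1.val/4 = i.val ∧ v.2.val/4 = j.val ∧
      ((u.1 ≠ v.1 ∧ u.2 = v.2) ∨ (u.2 ≠ v.2 ∧ u.1 = v.1)) := by
  obtain ⟨y, hy, rfl⟩ := he
  induction y using Sym2.ind with
  | _ p q =>
    rw [SimpleGraph.mem_edgeSet, K44, SimpleGraph.boxProd_adj, SimpleGraph.top_adj,
      SimpleGraph.top_adj] at hy
    rw [Sym2.map_pair_eq]
    refine ⟨embB a b i j p, embB a b i j q, rfl, ?_, ?_, ?_, ?_, ?_⟩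
    · simp only [embB]; have := p.1.isLt; omega
    · simp only [embB]; have := p.2.isLt; omega
    · simp only [embB]; have := q.1.isLt; omega
    · simp only [embB]; have := q.2.isLt; omega
    · rcases hy with ⟨h1, h2⟩ | ⟨h1, h2⟩
      · refine Or.inl ⟨?_, ?_⟩
        · intro hc
          have := congrArg Fin.val hc
          simp only [embB] at this
          exact h1 (Fin.ext (by omega))
        · apply Fin.ext; simp only [embB, h2]
      · refine Or.inr ⟨?_, ?_⟩
        · intro hc
          have := congrArg Fin.val hc
          simp only [embB] at this
          exact h1 (Fin.ext (by omega))
        · apply Fin.ext; simp only [embB, h2]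

lemma memR_elim {r : Fin (4*a)} {j j' : Fin b} {e : Sym2 (Fin (4*a) × Fin (4*b))}
    (he : e ∈ Sym2.map (embR a b r j j') '' b44.edgeSet) :
    ∃ u v : Fin (4*a) × Fin (4*b), e = s(u,v) ∧
      u.1 = r ∧ v.1 = r ∧ u.2.val/4 = j.val ∧ v.2.val/4 = j'.val := by
  obtain ⟨y, hy, rfl⟩ := he
  induction y using Sym2.ind with
  | _ p q =>
    rw [SimpleGraph.mem_edgeSet, b44, SimpleGraph.fromRel_adj] at hy
    rw [Sym2.map_pair_eq]
    have hp := p.isLt; have hq := q.isLt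
    rcases hy.2 with ⟨h1, h2⟩ | ⟨h1, h2⟩
    · refine ⟨embR a b r j j' p, embR a b r j j' q, rfl, rfl, rfl, ?_, ?_⟩
      · simp only [embR, if_pos h1]; omega
      · simp only [embR, if_neg (by omega : ¬ q.val < 4)]; omega
    · refine ⟨embR a b r j j' q, embR a b r j j' p, Sym2.eq_swap, rfl, rfl, ?_, ?_⟩
      · simp only [embR, if_pos h1]; omega
      · simp only [embR, if_neg (by omega : ¬ p.val < 4)]; omega

lemma memC_elim {c : Fin (4*b)} {i i' : Fin a} {e : Sym2 (Fin (4*a) × Fin (4*b))}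
    (he : e ∈ Sym2.map (embC a b c i i') '' b44.edgeSet) :
    ∃ u v : Fin (4*a) × Fin (4*b), e = s(u,v) ∧
      u.2 = c ∧ v.2 = c ∧ u.1.val/4 = i.val ∧ v.1.val/4 = i'.val := by
  obtain ⟨y, hy, rfl⟩ := he
  induction y using Sym2.ind with
  | _ p q =>
    rw [SimpleGraph.mem_edgeSet, b44, SimpleGraph.fromRel_adj] at hy
    rw [Sym2.map_pair_eq]
    have hp := p.isLt; have hq := q.isLt
    rcases hy.2 with ⟨h1, h2⟩ | ⟨h1, h2⟩
    · refine ⟨embC a b c i i' p, embC a b c i i' q, rfl, rfl, rfl, ?_, ?_⟩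
      · simp only [embC, if_pos h1]; omega
      · simp only [embC, if_neg (by omega : ¬ q.val < 4)]; omega
    · refine ⟨embC a b c i i' q, embC a b c i i' p, Sym2.eq_swap, rfl, rfl, ?_, ?_⟩
      · simp only [embC, if_pos h1]; omega
      · simp only [embC, if_neg (by omega : ¬ p.val < 4)]; omega


abbrev Idx : Type :=
  (Fin a × Fin b) ⊕
    ((Fin (4*a) × {p : Fin b × Fin b // p.1.val < p.2.val}) ⊕
     (Fin (4*b) × {p : Fin a × Fin a // p.1.val < p.2.val}))

abbrev Wty : Idx a b → Type
  | .inl _ => Fin 4 × Fin 4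
  | .inr (.inl _) => Fin 8
  | .inr (.inr _) => Fin 8

def Hgr : ∀ x : Idx a b, SimpleGraph (Wty a b x)
  | .inl _ => K44
  | .inr (.inl _) => b44
  | .inr (.inr _) => b44

def gfun : ∀ x : Idx a b, Wty a b x → Fin (4*a) × Fin (4*b)
  | .inl (i, j) => embB a b i j
  | .inr (.inl (r, p)) => embR a b r p.1.1 p.1.2
  | .inr (.inr (c, p)) => embC a b c p.1.1 p.1.2

lemma hcov : ((⊤ : SimpleGraph (Fin (4*a))) □ (⊤ : SimpleGraph (Fin (4*b)))).edgeSet =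
    ⋃ x, Sym2.map (gfun a b x) '' (Hgr a b x).edgeSet := by
  ext e
  induction e using Sym2.ind with
  | _ u v =>
  constructor
  · intro he
    rw [SimpleGraph.mem_edgeSet, SimpleGraph.boxProd_adj, SimpleGraph.top_adj,
      SimpleGraph.top_adj] at he
    rw [Set.mem_iUnion]
    have hu1 := u.1.isLt; have hu2 := u.2.isLt
    have hv1 := v.1.isLt; have hv2 := v.2.isLt
    rcases he with ⟨h1, h2⟩ | ⟨h1, h2⟩
    · -- vertical edge: u.1 ≠ v.1, u.2 = v.2
      have hval : u.1.val ≠ v.1.val := fun h => h1 (Fin.ext h)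
      rcases Nat.lt_trichotomy (u.1.val/4) (v.1.val/4) with hlt | heq | hgt
      · refine ⟨Sum.inr (Sum.inr (u.2, ⟨(⟨u.1.val/4, by omega⟩, ⟨v.1.val/4, by omega⟩), hlt⟩)),
          s((⟨u.1.val%4, by omega⟩ : Fin 8), (⟨4+v.1.val%4, by omega⟩ : Fin 8)), ?_, ?_⟩
        · show _ ∈ b44.edgeSet
          rw [SimpleGraph.mem_edgeSet, b44, SimpleGraph.fromRel_adj]
          refine ⟨by intro hc; rw [Fin.mk.injEq] at hc; omega, Or.inl ⟨by show u.1.val%4 < 4; omega, by show 4 ≤ 4+v.1.val%4; omega⟩⟩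
        · show Sym2.map (embC a b u.2 ⟨u.1.val/4, by omega⟩ ⟨v.1.val/4, by omega⟩) _ = _
          rw [Sym2.map_pair_eq]
          have e1 : embC a b u.2 ⟨u.1.val/4, by omega⟩ ⟨v.1.val/4, by omega⟩
              ⟨u.1.val%4, by omega⟩ = u := by
            refine Prod.ext (Fin.ext ?_) rfl
            show (if u.1.val%4 < 4 then 4*(u.1.val/4)+u.1.val%4 else _) = u.1.val
            rw [if_pos (by omega)]; omega
          have e2 : embC a b u.2 ⟨u.1.val/4, by omega⟩ ⟨v.1.val/4, by omega⟩
              ⟨4+v.1.val%4, by omega⟩ = v := by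
            refine Prod.ext (Fin.ext ?_) h2
            show (if 4+v.1.val%4 < 4 then _ else 4*(v.1.val/4)+(4+v.1.val%4-4)) = v.1.val
            rw [if_neg (by omega)]; omega
          rw [e1, e2]
      · refine ⟨Sum.inl (⟨u.1.val/4, by omega⟩, ⟨u.2.val/4, by omega⟩),
          s(((⟨u.1.val%4, by omega⟩ : Fin 4), (⟨u.2.val%4, by omega⟩ : Fin 4)),
            ((⟨v.1.val%4, by omega⟩ : Fin 4), (⟨v.2.val%4, by omega⟩ : Fin 4))), ?_, ?_⟩
        · show _ ∈ K44.edgeSet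
          rw [SimpleGraph.mem_edgeSet, K44, SimpleGraph.boxProd_adj, SimpleGraph.top_adj,
            SimpleGraph.top_adj]
          have h2v : u.2.val = v.2.val := congrArg Fin.val h2
          refine Or.inl ⟨fun hc => ?_, Fin.ext ?_⟩
          · have hcv : u.1.val%4 = v.1.val%4 := congrArg Fin.val hc
            omega
          · show u.2.val%4 = v.2.val%4
            omega
        · show Sym2.map (embB a b ⟨u.1.val/4, by omega⟩ ⟨u.2.val/4, by omega⟩) _ = _
          rw [Sym2.map_pair_eq]
          have h2v : u.2.val = v.2.val := congrArg Fin.val h2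
          have e1 : embB a b ⟨u.1.val/4, by omega⟩ ⟨u.2.val/4, by omega⟩
              (⟨u.1.val%4, by omega⟩, ⟨u.2.val%4, by omega⟩) = u := by
            refine Prod.ext (Fin.ext ?_) (Fin.ext ?_)
            · show 4*(u.1.val/4)+u.1.val%4 = u.1.val; omega
            · show 4*(u.2.val/4)+u.2.val%4 = u.2.val; omega
          have e2 : embB a b ⟨u.1.val/4, by omega⟩ ⟨u.2.val/4, by omega⟩
              (⟨v.1.val%4, by omega⟩, ⟨v.2.val%4, by omega⟩) = v := by
            refine Prod.ext (Fin.ext ?_) (Fin.ext ?_)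
            · show 4*(u.1.val/4)+v.1.val%4 = v.1.val; omega
            · show 4*(u.2.val/4)+v.2.val%4 = v.2.val; omega
          rw [e1, e2]
      · refine ⟨Sum.inr (Sum.inr (u.2, ⟨(⟨v.1.val/4, by omega⟩, ⟨u.1.val/4, by omega⟩), hgt⟩)),
          s((⟨v.1.val%4, by omega⟩ : Fin 8), (⟨4+u.1.val%4, by omega⟩ : Fin 8)), ?_, ?_⟩
        · show _ ∈ b44.edgeSet
          rw [SimpleGraph.mem_edgeSet, b44, SimpleGraph.fromRel_adj]
          refine ⟨by intro hc; rw [Fin.mk.injEq] at hc; omega, Or.inl ⟨by show v.1.val%4 < 4; omega, by show 4 ≤ 4+u.1.val%4; omega⟩⟩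
        · show Sym2.map (embC a b u.2 ⟨v.1.val/4, by omega⟩ ⟨u.1.val/4, by omega⟩) _ = _
          rw [Sym2.map_pair_eq]
          have e1 : embC a b u.2 ⟨v.1.val/4, by omega⟩ ⟨u.1.val/4, by omega⟩
              ⟨v.1.val%4, by omega⟩ = v := by
            refine Prod.ext (Fin.ext ?_) h2
            show (if v.1.val%4 < 4 then 4*(v.1.val/4)+v.1.val%4 else _) = v.1.val
            rw [if_pos (by omega)]; omega
          have e2 : embC a b u.2 ⟨v.1.val/4, by omega⟩ ⟨u.1.val/4, by omega⟩
              ⟨4+u.1.val%4, by omega⟩ = u := by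
            refine Prod.ext (Fin.ext ?_) rfl
            show (if 4+u.1.val%4 < 4 then _ else 4*(u.1.val/4)+(4+u.1.val%4-4)) = u.1.val
            rw [if_neg (by omega)]; omega
          rw [e1, e2]
          exact Sym2.eq_swap
    · -- horizontal edge: u.2 ≠ v.2, u.1 = v.1
      have hval : u.2.val ≠ v.2.val := fun h => h1 (Fin.ext h)
      rcases Nat.lt_trichotomy (u.2.val/4) (v.2.val/4) with hlt | heq | hgt
      · refine ⟨Sum.inr (Sum.inl (u.1, ⟨(⟨u.2.val/4, by omega⟩, ⟨v.2.val/4, by omega⟩), hlt⟩)),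
          s((⟨u.2.val%4, by omega⟩ : Fin 8), (⟨4+v.2.val%4, by omega⟩ : Fin 8)), ?_, ?_⟩
        · show _ ∈ b44.edgeSet
          rw [SimpleGraph.mem_edgeSet, b44, SimpleGraph.fromRel_adj]
          refine ⟨by intro hc; rw [Fin.mk.injEq] at hc; omega, Or.inl ⟨by show u.2.val%4 < 4; omega, by show 4 ≤ 4+v.2.val%4; omega⟩⟩
        · show Sym2.map (embR a b u.1 ⟨u.2.val/4, by omega⟩ ⟨v.2.val/4, by omega⟩) _ = _
          rw [Sym2.map_pair_eq]
          have e1 : embR a b u.1 ⟨u.2.val/4, by omega⟩ ⟨v.2.val/4, by omega⟩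
              ⟨u.2.val%4, by omega⟩ = u := by
            refine Prod.ext rfl (Fin.ext ?_)
            show (if u.2.val%4 < 4 then 4*(u.2.val/4)+u.2.val%4 else _) = u.2.val
            rw [if_pos (by omega)]; omega
          have e2 : embR a b u.1 ⟨u.2.val/4, by omega⟩ ⟨v.2.val/4, by omega⟩
              ⟨4+v.2.val%4, by omega⟩ = v := by
            refine Prod.ext h2 (Fin.ext ?_)
            show (if 4+v.2.val%4 < 4 then _ else 4*(v.2.val/4)+(4+v.2.val%4-4)) = v.2.val
            rw [if_neg (by omega)]; omega
          rw [e1, e2]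
      · refine ⟨Sum.inl (⟨u.1.val/4, by omega⟩, ⟨u.2.val/4, by omega⟩),
          s(((⟨u.1.val%4, by omega⟩ : Fin 4), (⟨u.2.val%4, by omega⟩ : Fin 4)),
            ((⟨v.1.val%4, by omega⟩ : Fin 4), (⟨v.2.val%4, by omega⟩ : Fin 4))), ?_, ?_⟩
        · show _ ∈ K44.edgeSet
          rw [SimpleGraph.mem_edgeSet, K44, SimpleGraph.boxProd_adj, SimpleGraph.top_adj,
            SimpleGraph.top_adj]
          have h2v : u.1.val = v.1.val := congrArg Fin.val h2
          refine Or.inr ⟨fun hc => ?_, Fin.ext ?_⟩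
          · have hcv : u.2.val%4 = v.2.val%4 := congrArg Fin.val hc
            omega
          · show u.1.val%4 = v.1.val%4
            omega
        · show Sym2.map (embB a b ⟨u.1.val/4, by omega⟩ ⟨u.2.val/4, by omega⟩) _ = _
          rw [Sym2.map_pair_eq]
          have h2v : u.1.val = v.1.val := congrArg Fin.val h2
          have e1 : embB a b ⟨u.1.val/4, by omega⟩ ⟨u.2.val/4, by omega⟩
              (⟨u.1.val%4, by omega⟩, ⟨u.2.val%4, by omega⟩) = u := by
            refine Prod.ext (Fin.ext ?_) (Fin.ext ?_)
            · show 4*(u.1.val/4)+u.1.val%4 = u.1.val; omega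
            · show 4*(u.2.val/4)+u.2.val%4 = u.2.val; omega
          have e2 : embB a b ⟨u.1.val/4, by omega⟩ ⟨u.2.val/4, by omega⟩
              (⟨v.1.val%4, by omega⟩, ⟨v.2.val%4, by omega⟩) = v := by
            refine Prod.ext (Fin.ext ?_) (Fin.ext ?_)
            · show 4*(u.1.val/4)+v.1.val%4 = v.1.val; omega
            · show 4*(u.2.val/4)+v.2.val%4 = v.2.val; omega
          rw [e1, e2]
      · refine ⟨Sum.inr (Sum.inl (u.1, ⟨(⟨v.2.val/4, by omega⟩, ⟨u.2.val/4, by omega⟩), hgt⟩)),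
          s((⟨v.2.val%4, by omega⟩ : Fin 8), (⟨4+u.2.val%4, by omega⟩ : Fin 8)), ?_, ?_⟩
        · show _ ∈ b44.edgeSet
          rw [SimpleGraph.mem_edgeSet, b44, SimpleGraph.fromRel_adj]
          refine ⟨by intro hc; rw [Fin.mk.injEq] at hc; omega, Or.inl ⟨by show v.2.val%4 < 4; omega, by show 4 ≤ 4+u.2.val%4; omega⟩⟩
        · show Sym2.map (embR a b u.1 ⟨v.2.val/4, by omega⟩ ⟨u.2.val/4, by omega⟩) _ = _
          rw [Sym2.map_pair_eq]
          have e1 : embR a b u.1 ⟨v.2.val/4, by omega⟩ ⟨u.2.val/4, by omega⟩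
              ⟨v.2.val%4, by omega⟩ = v := by
            refine Prod.ext h2 (Fin.ext ?_)
            show (if v.2.val%4 < 4 then 4*(v.2.val/4)+v.2.val%4 else _) = v.2.val
            rw [if_pos (by omega)]; omega
          have e2 : embR a b u.1 ⟨v.2.val/4, by omega⟩ ⟨u.2.val/4, by omega⟩
              ⟨4+u.2.val%4, by omega⟩ = u := by
            refine Prod.ext rfl (Fin.ext ?_)
            show (if 4+u.2.val%4 < 4 then _ else 4*(u.2.val/4)+(4+u.2.val%4-4)) = u.2.val
            rw [if_neg (by omega)]; omega
          rw [e1, e2]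
          exact Sym2.eq_swap
  · intro he
    rw [Set.mem_iUnion] at he
    obtain ⟨x, hx⟩ := he
    rw [SimpleGraph.mem_edgeSet, SimpleGraph.boxProd_adj, SimpleGraph.top_adj,
      SimpleGraph.top_adj]
    rcases x with ⟨i, j⟩ | (⟨r, ⟨⟨j1, j1'⟩, hj⟩⟩ | ⟨c, ⟨⟨i1, i1'⟩, hi⟩⟩)
    · obtain ⟨u', v', heq, _, _, _, _, hor⟩ := memB_elim a b hx
      rw [Sym2.eq_iff] at heq
      rcases heq with ⟨rfl, rfl⟩ | ⟨rfl, rfl⟩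
      · exact hor
      · tauto
    · obtain ⟨u', v', heq, hr1, hr2, hg1, hg2⟩ := memR_elim a b hx
      replace hj : j1.val < j1'.val := hj
      replace hg1 : u'.2.val/4 = j1.val := hg1
      replace hg2 : v'.2.val/4 = j1'.val := hg2
      have hne : u'.2 ≠ v'.2 := fun h => by
        have := congrArg Fin.val h; omega
      rw [Sym2.eq_iff] at heq
      rcases heq with ⟨rfl, rfl⟩ | ⟨rfl, rfl⟩
      · exact Or.inr ⟨hne, hr1.trans hr2.symm⟩
      · exact Or.inr ⟨fun h => hne h.symm, hr2.trans hr1.symm⟩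
    · obtain ⟨u', v', heq, hr1, hr2, hg1, hg2⟩ := memC_elim a b hx
      replace hi : i1.val < i1'.val := hi
      replace hg1 : u'.1.val/4 = i1.val := hg1
      replace hg2 : v'.1.val/4 = i1'.val := hg2
      have hne : u'.1 ≠ v'.1 := fun h => by
        have := congrArg Fin.val h; omega
      rw [Sym2.eq_iff] at heq
      rcases heq with ⟨rfl, rfl⟩ | ⟨rfl, rfl⟩
      · exact Or.inl ⟨hne, hr1.trans hr2.symm⟩
      · exact Or.inl ⟨fun h => hne h.symm, hr2.trans hr1.symm⟩

lemma hdisj : ∀ x x' : Idx a b, x ≠ x' →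
    Disjoint (Sym2.map (gfun a b x) '' (Hgr a b x).edgeSet)
      (Sym2.map (gfun a b x') '' (Hgr a b x').edgeSet) := by
  intro x x' hne
  rw [Set.disjoint_left]
  intro e he he'
  rcases x with ⟨i, j⟩ | (⟨r, ⟨⟨j1, j1'⟩, hj⟩⟩ | ⟨c, ⟨⟨i1, i1'⟩, hi⟩⟩) <;>
    rcases x' with ⟨i', j'⟩ | (⟨r', ⟨⟨j2, j2'⟩, hj2⟩⟩ | ⟨c', ⟨⟨i2, i2'⟩, hi2⟩⟩)
  · -- B B
    obtain ⟨u, v, heq, ha1, ha2, ha3, ha4, -⟩ := memB_elim a b he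
    obtain ⟨u2, v2, heq2, hb1, hb2, hb3, hb4, -⟩ := memB_elim a b he'
    have h := heq.symm.trans heq2
    rw [Sym2.eq_iff] at h
    obtain rfl : i = i' := by rcases h with ⟨rfl, rfl⟩ | ⟨rfl, rfl⟩ <;> exact Fin.ext (by omega)
    obtain rfl : j = j' := by rcases h with ⟨rfl, rfl⟩ | ⟨rfl, rfl⟩ <;> exact Fin.ext (by omega)
    exact hne rfl
  · -- B R
    obtain ⟨u, v, heq, ha1, ha2, ha3, ha4, -⟩ := memB_elim a b he
    obtain ⟨u2, v2, heq2, -, -, hb1, hb2⟩ := memR_elim a b he'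
    replace hj2 : j2.val < j2'.val := hj2
    replace hb1 : u2.2.val/4 = j2.val := hb1
    replace hb2 : v2.2.val/4 = j2'.val := hb2
    have h := heq.symm.trans heq2
    rw [Sym2.eq_iff] at h
    rcases h with ⟨rfl, rfl⟩ | ⟨rfl, rfl⟩ <;> omega
  · -- B C
    obtain ⟨u, v, heq, ha1, ha2, ha3, ha4, -⟩ := memB_elim a b he
    obtain ⟨u2, v2, heq2, -, -, hb1, hb2⟩ := memC_elim a b he'
    replace hi2 : i2.val < i2'.val := hi2
    replace hb1 : u2.1.val/4 = i2.val := hb1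
    replace hb2 : v2.1.val/4 = i2'.val := hb2
    have h := heq.symm.trans heq2
    rw [Sym2.eq_iff] at h
    rcases h with ⟨rfl, rfl⟩ | ⟨rfl, rfl⟩ <;> omega
  · -- R B
    obtain ⟨u, v, heq, -, -, ha1, ha2⟩ := memR_elim a b he
    obtain ⟨u2, v2, heq2, hb1, hb2, hb3, hb4, -⟩ := memB_elim a b he'
    replace hj : j1.val < j1'.val := hj
    replace ha1 : u.2.val/4 = j1.val := ha1
    replace ha2 : v.2.val/4 = j1'.val := ha2
    have h := heq.symm.trans heq2
    rw [Sym2.eq_iff] at h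
    rcases h with ⟨rfl, rfl⟩ | ⟨rfl, rfl⟩ <;> omega
  · -- R R
    obtain ⟨u, v, heq, ha1, ha2, ha3, ha4⟩ := memR_elim a b he
    obtain ⟨u2, v2, heq2, hb1, hb2, hb3, hb4⟩ := memR_elim a b he'
    replace hj : j1.val < j1'.val := hj
    replace hj2 : j2.val < j2'.val := hj2
    replace ha3 : u.2.val/4 = j1.val := ha3
    replace ha4 : v.2.val/4 = j1'.val := ha4
    replace hb3 : u2.2.val/4 = j2.val := hb3
    replace hb4 : v2.2.val/4 = j2'.val := hb4
    have h := heq.symm.trans heq2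
    rw [Sym2.eq_iff] at h
    rcases h with ⟨rfl, rfl⟩ | ⟨rfl, rfl⟩
    · obtain rfl : r = r' := ha1.symm.trans hb1
      obtain rfl : j1 = j2 := Fin.ext (by omega)
      obtain rfl : j1' = j2' := Fin.ext (by omega)
      exact hne rfl
    · omega
  · -- R C
    obtain ⟨u, v, heq, ha1, ha2, ha3, ha4⟩ := memR_elim a b he
    obtain ⟨u2, v2, heq2, hb1, hb2, hb3, hb4⟩ := memC_elim a b he'
    replace hi2 : i2.val < i2'.val := hi2
    replace hb3 : u2.1.val/4 = i2.val := hb3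
    replace hb4 : v2.1.val/4 = i2'.val := hb4
    have hr1 : u.1.val = r.val := congrArg Fin.val ha1
    have hr2 : v.1.val = r.val := congrArg Fin.val ha2
    have h := heq.symm.trans heq2
    rw [Sym2.eq_iff] at h
    rcases h with ⟨rfl, rfl⟩ | ⟨rfl, rfl⟩ <;> omega
  · -- C B
    obtain ⟨u, v, heq, -, -, ha1, ha2⟩ := memC_elim a b he
    obtain ⟨u2, v2, heq2, hb1, hb2, hb3, hb4, -⟩ := memB_elim a b he'
    replace hi : i1.val < i1'.val := hi
    replace ha1 : u.1.val/4 = i1.val := ha1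
    replace ha2 : v.1.val/4 = i1'.val := ha2
    have h := heq.symm.trans heq2
    rw [Sym2.eq_iff] at h
    rcases h with ⟨rfl, rfl⟩ | ⟨rfl, rfl⟩ <;> omega
  · -- C R
    obtain ⟨u, v, heq, ha1, ha2, ha3, ha4⟩ := memC_elim a b he
    obtain ⟨u2, v2, heq2, hb1, hb2, hb3, hb4⟩ := memR_elim a b he'
    replace hi : i1.val < i1'.val := hi
    replace ha3 : u.1.val/4 = i1.val := ha3
    replace ha4 : v.1.val/4 = i1'.val := ha4
    have hr1 : u2.1.val = r'.val := congrArg Fin.val hb1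
    have hr2 : v2.1.val = r'.val := congrArg Fin.val hb2
    have h := heq.symm.trans heq2
    rw [Sym2.eq_iff] at h
    rcases h with ⟨rfl, rfl⟩ | ⟨rfl, rfl⟩ <;> omega
  · -- C C
    obtain ⟨u, v, heq, ha1, ha2, ha3, ha4⟩ := memC_elim a b he
    obtain ⟨u2, v2, heq2, hb1, hb2, hb3, hb4⟩ := memC_elim a b he'
    replace hi : i1.val < i1'.val := hi
    replace hi2 : i2.val < i2'.val := hi2
    replace ha3 : u.1.val/4 = i1.val := ha3
    replace ha4 : v.1.val/4 = i1'.val := ha4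
    replace hb3 : u2.1.val/4 = i2.val := hb3
    replace hb4 : v2.1.val/4 = i2'.val := hb4
    have h := heq.symm.trans heq2
    rw [Sym2.eq_iff] at h
    rcases h with ⟨rfl, rfl⟩ | ⟨rfl, rfl⟩
    · obtain rfl : c = c' := ha1.symm.trans hb1
      obtain rfl : i1 = i2 := Fin.ext (by omega)
      obtain rfl : i1' = i2' := Fin.ext (by omega)
      exact hne rfl
    · omega

end Emb


section Final
variable (a b : ℕ)

lemma hinj : ∀ x : Idx a b, Function.Injective (gfun a b x) := by
  rintro (⟨i, j⟩ | (⟨r, ⟨⟨j1, j1'⟩, hj⟩⟩ | ⟨c, ⟨⟨i1, i1'⟩, hi⟩⟩))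
  · exact embB_inj a b i j
  · exact embR_inj a b r j1 j1' hj
  · exact embC_inj a b c i1 i1' hi

lemma hdec : ∀ x : Idx a b, HasSunletDecomposition (Hgr a b x) := by
  rintro (⟨i, j⟩ | (⟨r, p⟩ | ⟨c, p⟩))
  · exact decK44
  · exact decB44
  · exact decB44

end Final

theorem stmt_1 (m n : ℕ) (hm : 0 < m) (hn : 0 < n) (h1 : m % 4 = 0) (h2 : n % 4 = 0) :
    HasSunletDecomposition ((⊤ : SimpleGraph (Fin m)) □ (⊤ : SimpleGraph (Fin n))) := by
  obtain ⟨a, rfl⟩ : ∃ a, m = 4*a := ⟨m/4, by omega⟩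
  obtain ⟨b, rfl⟩ : ∃ b, n = 4*b := ⟨n/4, by omega⟩
  exact glue _ (Hgr a b) (gfun a b) (hinj a b) (hdec a b) (hcov a b) (hdisj a b)
end

section
/- If m and n are positive integers with m ≡ 1 (mod 16) and n ≡ 1 (mod 16), then the graph K_m □ K_n has an L_8-decomposition. -/
open SimpleGraph

/-! ### Auxiliary material -/

theorem sunlet8_edgeSet : sunlet8.edgeSet =
    {s(0,1), s(1,2), s(2,3), s(0,3), s(0,4), s(1,5), s(2,6), s(3,7)} := by
  ext e
  induction e using Sym2.ind with
  | _ x y =>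
    simp only [mem_edgeSet, sunlet8, fromRel_adj, Set.mem_insert_iff, Set.mem_singleton_iff]
    revert x y
    decide

theorem IsSunletCopy.image {V W : Type*} {s : Set (Sym2 V)} (h : IsSunletCopy s)
    {g : V → W} (hg : Function.Injective g) : IsSunletCopy (Sym2.map g '' s) := by
  obtain ⟨f, hf, rfl⟩ := h
  refine ⟨g ∘ f, hg.comp hf, ?_⟩
  rw [Set.image_image]
  simp only [Sym2.map_map]

/-- base vertices of the `k`-th block in `ZMod (16a+1)` (as naturals). -/
def gv (a k : ℕ) (x : Fin 8) : ℕ :=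
  if x.val = 0 then 0 else if x.val = 1 then 8*k+1 else if x.val = 2 then 16*a
  else if x.val = 3 then 8*k+3 else if x.val = 4 then 8*k+5 else if x.val = 5 then 16*k+7
  else if x.val = 6 then 8*k+6 else 16*k+11

/-- the "lower" endpoint of the `j`-th edge of a block (as a natural). -/
def lov (a k : ℕ) (x : Fin 8) : ℕ :=
  if x.val = 0 then 0 else if x.val = 1 then 16*a else if x.val = 2 then 16*a
  else if x.val = 3 then 0 else if x.val = 4 then 0 else if x.val = 5 then 8*k+1
  else if x.val = 6 then 16*a else 8*k+3

/-- the canonical difference of the `j`-th edge of the `k`-th block. -/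
def dv (k : ℕ) (x : Fin 8) : ℕ :=
  if x.val = 0 then 8*k+1 else if x.val = 1 then 8*k+2 else if x.val = 2 then 8*k+4
  else if x.val = 3 then 8*k+3 else if x.val = 4 then 8*k+5 else if x.val = 5 then 8*k+6
  else if x.val = 6 then 8*k+7 else 8*k+8

/-- the `k`-th base block translated by `t`. -/
def blockv (a k : ℕ) (t : ZMod (16*a+1)) : Set (Sym2 (ZMod (16*a+1))) :=
  Sym2.map (fun x => t + ((gv a k x : ℕ) : ZMod (16*a+1))) '' sunlet8.edgeSet

theorem mem_blockv {a k : ℕ} (t : ZMod (16*a+1)) (z : Sym2 (ZMod (16*a+1))) :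
    z ∈ blockv a k t ↔ ∃ j : Fin 8,
      z = s(t + ((lov a k j : ℕ) : ZMod (16*a+1)),
            t + ((lov a k j : ℕ) : ZMod (16*a+1)) + ((dv k j : ℕ) : ZMod (16*a+1))) := by
  have hv : ((16*a+1 : ℕ) : ZMod (16*a+1)) = 0 := ZMod.natCast_self _
  push_cast at hv
  have e0 : s(t + ((0 : ℕ) : ZMod (16*a+1)), t + ((8*k+1 : ℕ) : ZMod (16*a+1)))
      = s(t + ((0 : ℕ) : ZMod (16*a+1)),
          t + ((0 : ℕ) : ZMod (16*a+1)) + ((8*k+1 : ℕ) : ZMod (16*a+1))) := by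
    rw [Sym2.eq_iff]; left
    constructor <;> (push_cast; first | ring1 | linear_combination hv | linear_combination -hv)
  have e1 : s(t + ((8*k+1 : ℕ) : ZMod (16*a+1)), t + ((16*a : ℕ) : ZMod (16*a+1)))
      = s(t + ((16*a : ℕ) : ZMod (16*a+1)),
          t + ((16*a : ℕ) : ZMod (16*a+1)) + ((8*k+2 : ℕ) : ZMod (16*a+1))) := by
    rw [Sym2.eq_iff]; right
    constructor <;> (push_cast; first | ring1 | linear_combination hv | linear_combination -hv)
  have e2 : s(t + ((16*a : ℕ) : ZMod (16*a+1)), t + ((8*k+3 : ℕ) : ZMod (16*a+1)))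
      = s(t + ((16*a : ℕ) : ZMod (16*a+1)),
          t + ((16*a : ℕ) : ZMod (16*a+1)) + ((8*k+4 : ℕ) : ZMod (16*a+1))) := by
    rw [Sym2.eq_iff]; left
    constructor <;> (push_cast; first | ring1 | linear_combination hv | linear_combination -hv)
  have e3 : s(t + ((0 : ℕ) : ZMod (16*a+1)), t + ((8*k+3 : ℕ) : ZMod (16*a+1)))
      = s(t + ((0 : ℕ) : ZMod (16*a+1)),
          t + ((0 : ℕ) : ZMod (16*a+1)) + ((8*k+3 : ℕ) : ZMod (16*a+1))) := by
    rw [Sym2.eq_iff]; left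
    constructor <;> (push_cast; first | ring1 | linear_combination hv | linear_combination -hv)
  have e4 : s(t + ((0 : ℕ) : ZMod (16*a+1)), t + ((8*k+5 : ℕ) : ZMod (16*a+1)))
      = s(t + ((0 : ℕ) : ZMod (16*a+1)),
          t + ((0 : ℕ) : ZMod (16*a+1)) + ((8*k+5 : ℕ) : ZMod (16*a+1))) := by
    rw [Sym2.eq_iff]; left
    constructor <;> (push_cast; first | ring1 | linear_combination hv | linear_combination -hv)
  have e5 : s(t + ((8*k+1 : ℕ) : ZMod (16*a+1)), t + ((16*k+7 : ℕ) : ZMod (16*a+1)))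
      = s(t + ((8*k+1 : ℕ) : ZMod (16*a+1)),
          t + ((8*k+1 : ℕ) : ZMod (16*a+1)) + ((8*k+6 : ℕ) : ZMod (16*a+1))) := by
    rw [Sym2.eq_iff]; left
    constructor <;> (push_cast; first | ring1 | linear_combination hv | linear_combination -hv)
  have e6 : s(t + ((16*a : ℕ) : ZMod (16*a+1)), t + ((8*k+6 : ℕ) : ZMod (16*a+1)))
      = s(t + ((16*a : ℕ) : ZMod (16*a+1)),
          t + ((16*a : ℕ) : ZMod (16*a+1)) + ((8*k+7 : ℕ) : ZMod (16*a+1))) := by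
    rw [Sym2.eq_iff]; left
    constructor <;> (push_cast; first | ring1 | linear_combination hv | linear_combination -hv)
  have e7 : s(t + ((8*k+3 : ℕ) : ZMod (16*a+1)), t + ((16*k+11 : ℕ) : ZMod (16*a+1)))
      = s(t + ((8*k+3 : ℕ) : ZMod (16*a+1)),
          t + ((8*k+3 : ℕ) : ZMod (16*a+1)) + ((8*k+8 : ℕ) : ZMod (16*a+1))) := by
    rw [Sym2.eq_iff]; left
    constructor <;> (push_cast; first | ring1 | linear_combination hv | linear_combination -hv)
  unfold blockv
  rw [sunlet8_edgeSet]
  simp only [Set.image_insert_eq, Set.image_singleton, Sym2.map_pair_eq,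
    Set.mem_insert_iff, Set.mem_singleton_iff]
  constructor
  · rintro (rfl|rfl|rfl|rfl|rfl|rfl|rfl|rfl)
    · exact ⟨0, e0⟩
    · exact ⟨1, e1⟩
    · exact ⟨2, e2⟩
    · exact ⟨3, e3⟩
    · exact ⟨4, e4⟩
    · exact ⟨5, e5⟩
    · exact ⟨6, e6⟩
    · exact ⟨7, e7⟩
  · rintro ⟨j, rfl⟩
    fin_cases j
    · exact Or.inl e0.symm
    · exact Or.inr (Or.inl e1.symm)
    · exact Or.inr (Or.inr (Or.inl e2.symm))
    · exact Or.inr (Or.inr (Or.inr (Or.inl e3.symm)))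
    · exact Or.inr (Or.inr (Or.inr (Or.inr (Or.inl e4.symm))))
    · exact Or.inr (Or.inr (Or.inr (Or.inr (Or.inr (Or.inl e5.symm)))))
    · exact Or.inr (Or.inr (Or.inr (Or.inr (Or.inr (Or.inr (Or.inl e6.symm))))))
    · exact Or.inr (Or.inr (Or.inr (Or.inr (Or.inr (Or.inr (Or.inr e7.symm))))))

theorem blockv_isCopy {a k : ℕ} (hk : k < a) (t : ZMod (16*a+1)) :
    IsSunletCopy (blockv a k t) := by
  refine ⟨fun x => t + ((gv a k x : ℕ) : ZMod (16*a+1)), ?_, rfl⟩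
  have hb : ∀ x : Fin 8, gv a k x < 16*a+1 := by
    intro x
    fin_cases x <;> simp only [gv] <;> norm_num <;> omega
  intro x y h
  have h2 : ((gv a k x : ℕ) : ZMod (16*a+1)) = ((gv a k y : ℕ) : ZMod (16*a+1)) :=
    add_left_cancel h
  have h3 := congrArg ZMod.val h2
  rw [ZMod.val_cast_of_lt (hb x), ZMod.val_cast_of_lt (hb y)] at h3
  fin_cases x <;> fin_cases y <;> simp only [gv] at h3 <;> first | rfl | (norm_num at h3 <;> omega)

/-- bounds on the canonical differences. -/
theorem dv_bounds {a k : ℕ} (hk : k < a) (j : Fin 8) : 1 ≤ dv k j ∧ dv k j ≤ 8*a := by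
  fin_cases j <;> simp only [dv] <;> norm_num <;> omega

theorem dv_inj {a k k' : ℕ} (hk : k < a) (hk' : k' < a) {j j' : Fin 8}
    (h : dv k j = dv k' j') : k = k' ∧ j = j' := by
  fin_cases j <;> fin_cases j' <;> simp only [dv] at h <;> norm_num at h ⊢ <;> omega

/-- inverse of the within-block permutation of differences. -/
def jofr : ℕ → Fin 8
  | 0 => 0 | 1 => 1 | 2 => 3 | 3 => 2 | 4 => 4 | 5 => 5 | 6 => 6 | _ => 7

theorem dv_jofr (k r : ℕ) (hr : r < 8) : dv k (jofr r) = 8*k + r + 1 := by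
  interval_cases r <;>
    first
    | (show 8*k+1 = _; omega)
    | (show 8*k+2 = _; omega)
    | (show 8*k+3 = _; omega)
    | (show 8*k+4 = _; omega)
    | (show 8*k+5 = _; omega)
    | (show 8*k+6 = _; omega)
    | (show 8*k+7 = _; omega)
    | (show 8*k+8 = _; omega)

theorem kv (a : ℕ) : HasSunletDecomposition (⊤ : SimpleGraph (ZMod (16*a+1))) := by
  haveI : NeZero (16*a+1) := ⟨Nat.succ_ne_zero _⟩
  refine ⟨{s | ∃ k < a, ∃ t, s = blockv a k t}, ?_, ?_, ?_⟩
  · ext z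
    constructor
    · rintro ⟨s, ⟨k, hk, t, rfl⟩, hz⟩
      rw [mem_blockv] at hz
      obtain ⟨j, rfl⟩ := hz
      rw [mem_edgeSet, top_adj]
      intro heq
      have h0 : ((dv k j : ℕ) : ZMod (16*a+1)) = 0 := (left_eq_add.mp heq)
      have h1 := congrArg ZMod.val h0
      rw [ZMod.val_cast_of_lt (by have := dv_bounds hk j; omega), ZMod.val_zero] at h1
      have := dv_bounds hk j
      omega
    · intro hz
      induction z using Sym2.ind with
      | _ x y =>
        rw [mem_edgeSet, top_adj] at hz
        have hyx : y - x ≠ 0 := sub_ne_zero.mpr (Ne.symm hz)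
        set D := (y - x).val with hD
        have hD0 : D ≠ 0 := fun h => hyx ((ZMod.val_eq_zero _).mp h)
        have hDlt : D < 16*a+1 := ZMod.val_lt _
        have hDcast : ((D : ℕ) : ZMod (16*a+1)) = y - x := ZMod.natCast_rightInverse _
        set d : ℕ := if D ≤ 8*a then D else 16*a+1 - D with hd
        set p : ZMod (16*a+1) := if D ≤ 8*a then x else y with hp
        have hd1 : 1 ≤ d ∧ d ≤ 8*a := by rw [hd]; split_ifs <;> omega
        have hped : s(x, y) = s(p, p + ((d : ℕ) : ZMod (16*a+1))) := by
          rw [hd, hp]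
          split_ifs with hc
          · rw [Sym2.eq_iff]; left
            exact ⟨rfl, by rw [hDcast]; ring⟩
          · rw [Sym2.eq_iff]; right
            refine ⟨?_, rfl⟩
            rw [Nat.cast_sub (le_of_lt hDlt), hDcast, ZMod.natCast_self]
            ring
        set k : ℕ := (d-1)/8 with hk
        set r : ℕ := (d-1) % 8 with hr
        have hr8 : r < 8 := Nat.mod_lt _ (by norm_num)
        have hka : k < a := by omega
        have hdj : dv k (jofr r) = d := by rw [dv_jofr k r hr8]; omega
        refine ⟨blockv a k (p - ((lov a k (jofr r) : ℕ) : ZMod (16*a+1))),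
          ⟨k, hka, _, rfl⟩, ?_⟩
        rw [mem_blockv]
        refine ⟨jofr r, ?_⟩
        rw [hped, hdj]
        rw [Sym2.eq_iff]; left
        constructor <;> ring
  · intro s hs s' hs' hne
    obtain ⟨k, hk, t, rfl⟩ := hs
    obtain ⟨k', hk', t', rfl⟩ := hs'
    simp only [Function.onFun, id_eq]
    rw [Set.disjoint_left]
    intro z hz hz'
    rw [mem_blockv] at hz hz'
    obtain ⟨j, rfl⟩ := hz
    obtain ⟨j', heq⟩ := hz'
    rw [Sym2.eq_iff] at heq
    have hb := dv_bounds hk j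
    have hb' := dv_bounds hk' j'
    have hcast_inj : ∀ u w : ℕ, u < 16*a+1 → w < 16*a+1 →
        ((u : ℕ) : ZMod (16*a+1)) = ((w : ℕ) : ZMod (16*a+1)) → u = w := by
      intro u w hu hw h
      have := congrArg ZMod.val h
      rwa [ZMod.val_cast_of_lt hu, ZMod.val_cast_of_lt hw] at this
    rcases heq with ⟨h1, h2⟩ | ⟨h1, h2⟩
    · have hBB : ((dv k j : ℕ) : ZMod (16*a+1)) = ((dv k' j' : ℕ) : ZMod (16*a+1)) := by
        rw [h1] at h2
        exact add_left_cancel h2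
      have hdd : dv k j = dv k' j' := hcast_inj _ _ (by omega) (by omega) hBB
      obtain ⟨rfl, rfl⟩ := dv_inj hk hk' hdd
      have htt : t = t' := add_right_cancel h1
      exact hne (by rw [htt])
    · have hsum : ((dv k j + dv k' j' : ℕ) : ZMod (16*a+1)) = 0 := by
        push_cast
        linear_combination h2 - h1
      have h0 := hcast_inj (dv k j + dv k' j') 0 (by omega) (by omega)
        (by rw [Nat.cast_zero]; exact hsum)
      omega
  · rintro s ⟨k, hk, t, rfl⟩
    exact blockv_isCopy hk t

theorem top_transfer {V W : Type*} (e : V ≃ W)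
    (h : HasSunletDecomposition (⊤ : SimpleGraph V)) :
    HasSunletDecomposition (⊤ : SimpleGraph W) := by
  obtain ⟨P, hU, hD, hC⟩ := h
  have hinj : Function.Injective (Sym2.map (⇑e)) := Sym2.map.injective e.injective
  refine ⟨(fun s => Sym2.map (⇑e) '' s) '' P, ?_, ?_, ?_⟩
  · rw [← Set.image_sUnion, hU]
    ext z
    simp only [edgeSet_top, Set.mem_image, Set.mem_setOf_eq]
    constructor
    · rintro ⟨w, hw, rfl⟩
      induction w using Sym2.ind with
      | _ u v =>
        simp only [Sym2.map_pair_eq, Sym2.mk_isDiag_iff] at *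
        exact fun hc => hw (e.injective hc)
    · intro hz
      refine ⟨Sym2.map (⇑e.symm) z, ?_, ?_⟩
      · induction z using Sym2.ind with
        | _ u v =>
          simp only [Sym2.map_pair_eq, Sym2.mk_isDiag_iff] at *
          exact fun hc => hz (by rw [← e.apply_symm_apply u, ← e.apply_symm_apply v, Sym2.mem_diagSet, Sym2.mk_isDiag_iff,
            Sym2.mk_isDiag_iff.mp hc])
      · rw [Sym2.map_map]
        simp only [Equiv.self_comp_symm, Sym2.map_id', id_eq]
  · intro s hs s' hs' hne
    obtain ⟨s0, h0, rfl⟩ := hs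
    obtain ⟨s0', h0', rfl⟩ := hs'
    have hne0 : s0 ≠ s0' := fun h => hne (by rw [h])
    exact (Set.disjoint_image_iff hinj).mpr (hD h0 h0' hne0)
  · rintro s ⟨s0, h0, rfl⟩
    exact (hC s0 h0).image e.injective

theorem box_decomp {α β : Type*} (G : SimpleGraph α) (H : SimpleGraph β)
    (hG : HasSunletDecomposition G) (hH : HasSunletDecomposition H) :
    HasSunletDecomposition (G □ H) := by
  obtain ⟨P, hPU, hPD, hPC⟩ := hG
  obtain ⟨Q, hQU, hQD, hQC⟩ := hH
  have hinj1 : ∀ a : α, Function.Injective (fun v : β => ((a, v) : α × β)) := by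
    intro a x y h; exact (Prod.ext_iff.mp h).2
  have hinj2 : ∀ b : β, Function.Injective (fun v : α => ((v, b) : α × β)) := by
    intro b x y h; exact (Prod.ext_iff.mp h).1
  have hrow : ∀ (a : α) (q : Set (Sym2 β)), q ∈ Q →
      ∀ z ∈ Sym2.map (fun v : β => ((a, v) : α × β)) '' q,
        ∃ u w, H.Adj u w ∧ z = s((a, u), (a, w)) := by
    rintro a q hq z ⟨e, he, rfl⟩
    have he' : e ∈ H.edgeSet := hQU ▸ ⟨q, hq, he⟩
    induction e using Sym2.ind with
    | _ u w =>
      exact ⟨u, w, he', by rw [Sym2.map_pair_eq]⟩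
  have hcol : ∀ (b : β) (p : Set (Sym2 α)), p ∈ P →
      ∀ z ∈ Sym2.map (fun v : α => ((v, b) : α × β)) '' p,
        ∃ u w, G.Adj u w ∧ z = s((u, b), (w, b)) := by
    rintro b p hp z ⟨e, he, rfl⟩
    have he' : e ∈ G.edgeSet := hPU ▸ ⟨p, hp, he⟩
    induction e using Sym2.ind with
    | _ u w =>
      exact ⟨u, w, he', by rw [Sym2.map_pair_eq]⟩
  refine ⟨{s | (∃ a, ∃ q ∈ Q, s = Sym2.map (fun v : β => ((a, v) : α × β)) '' q) ∨
              (∃ b, ∃ p ∈ P, s = Sym2.map (fun v : α => ((v, b) : α × β)) '' p)}, ?_, ?_, ?_⟩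
  · ext z
    constructor
    · rintro ⟨s, (⟨a, q, hq, rfl⟩ | ⟨b, p, hp, rfl⟩), hz⟩
      · obtain ⟨u, w, huw, rfl⟩ := hrow a q hq z hz
        rw [mem_edgeSet, boxProd_adj]
        exact Or.inr ⟨huw, rfl⟩
      · obtain ⟨u, w, huw, rfl⟩ := hcol b p hp z hz
        rw [mem_edgeSet, boxProd_adj]
        exact Or.inl ⟨huw, rfl⟩
    · intro hz
      induction z using Sym2.ind with
      | _ x y =>
        obtain ⟨x1, x2⟩ := x
        obtain ⟨y1, y2⟩ := y
        rw [mem_edgeSet, boxProd_adj] at hz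
        rcases hz with ⟨hadj, heq⟩ | ⟨hadj, heq⟩
        · simp only at hadj heq
          have hmem : s(x1, y1) ∈ G.edgeSet := hadj
          rw [← hPU] at hmem
          obtain ⟨p, hp, hep⟩ := hmem
          refine ⟨Sym2.map (fun v : α => ((v, x2) : α × β)) '' p,
            Or.inr ⟨x2, p, hp, rfl⟩, ⟨s(x1, y1), hep, ?_⟩⟩
          rw [Sym2.map_pair_eq, heq]
        · simp only at hadj heq
          have hmem : s(x2, y2) ∈ H.edgeSet := hadj
          rw [← hQU] at hmem
          obtain ⟨q, hq, heq'⟩ := hmem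
          refine ⟨Sym2.map (fun v : β => ((x1, v) : α × β)) '' q,
            Or.inl ⟨x1, q, hq, rfl⟩, ⟨s(x2, y2), heq', ?_⟩⟩
          rw [Sym2.map_pair_eq, heq]
  · intro s hs s' hs' hne
    simp only [Function.onFun, id_eq]
    rcases hs with ⟨a, q, hq, rfl⟩ | ⟨b, p, hp, rfl⟩ <;>
      rcases hs' with ⟨a', q', hq', rfl⟩ | ⟨b', p', hp', rfl⟩
    · by_cases haa : a = a'
      · subst haa
        have hqq : q ≠ q' := fun h => hne (by rw [h])
        exact (Set.disjoint_image_iff (Sym2.map.injective (hinj1 a))).mpr (hQD hq hq' hqq)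
      · rw [Set.disjoint_left]
        intro z hz hz'
        obtain ⟨u, w, _, rfl⟩ := hrow a q hq z hz
        obtain ⟨u', w', _, heq⟩ := hrow a' q' hq' _ hz'
        rw [Sym2.eq_iff] at heq
        rcases heq with ⟨h1, _⟩ | ⟨h1, _⟩ <;> exact haa (congrArg Prod.fst h1)
    · rw [Set.disjoint_left]
      intro z hz hz'
      obtain ⟨u, w, huw, rfl⟩ := hrow a q hq z hz
      obtain ⟨u', w', huw', heq⟩ := hcol b' p' hp' _ hz'
      rw [Sym2.eq_iff] at heq
      rcases heq with ⟨h1, h2⟩ | ⟨h1, h2⟩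
      · exact huw.ne ((congrArg Prod.snd h1).trans (congrArg Prod.snd h2).symm)
      · exact huw.ne ((congrArg Prod.snd h1).trans (congrArg Prod.snd h2).symm)
    · rw [Set.disjoint_left]
      intro z hz hz'
      obtain ⟨u, w, huw, rfl⟩ := hcol b p hp z hz
      obtain ⟨u', w', huw', heq⟩ := hrow a' q' hq' _ hz'
      rw [Sym2.eq_iff] at heq
      rcases heq with ⟨h1, h2⟩ | ⟨h1, h2⟩
      · exact huw.ne ((congrArg Prod.fst h1).trans (congrArg Prod.fst h2).symm)
      · exact huw.ne ((congrArg Prod.fst h1).trans (congrArg Prod.fst h2).symm)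
    · by_cases hbb : b = b'
      · subst hbb
        have hpp : p ≠ p' := fun h => hne (by rw [h])
        exact (Set.disjoint_image_iff (Sym2.map.injective (hinj2 b))).mpr (hPD hp hp' hpp)
      · rw [Set.disjoint_left]
        intro z hz hz'
        obtain ⟨u, w, _, rfl⟩ := hcol b p hp z hz
        obtain ⟨u', w', _, heq⟩ := hcol b' p' hp' _ hz'
        rw [Sym2.eq_iff] at heq
        rcases heq with ⟨h1, _⟩ | ⟨h1, _⟩ <;> exact hbb (congrArg Prod.snd h1)
  · rintro s (⟨a, q, hq, rfl⟩ | ⟨b, p, hp, rfl⟩)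
    · exact (hQC q hq).image (hinj1 a)
    · exact (hPC p hp).image (hinj2 b)

/-- The equivalence between `ZMod v` and `Fin v` for `v ≠ 0`. -/
def zmodFin (v : ℕ) [NeZero v] : ZMod v ≃ Fin v :=
  ⟨fun x => ⟨x.val, ZMod.val_lt x⟩, fun i => ((i.val : ℕ) : ZMod v),
   fun x => ZMod.natCast_rightInverse x,
   fun i => Fin.ext (ZMod.val_cast_of_lt i.isLt)⟩

theorem top_fin_decomp (m : ℕ) (hm : 0 < m) (h1 : m % 16 = 1) :
    HasSunletDecomposition (⊤ : SimpleGraph (Fin m)) := by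
  have hm16 : 16 * (m / 16) + 1 = m := by omega
  haveI : NeZero (16 * (m / 16) + 1) := ⟨Nat.succ_ne_zero _⟩
  exact top_transfer ((zmodFin _).trans (finCongr hm16)) (kv (m / 16))

theorem stmt_4 (m n : ℕ) (hm : 0 < m) (hn : 0 < n) (h1 : m % 16 = 1) (h2 : n % 16 = 1) :
    HasSunletDecomposition ((⊤ : SimpleGraph (Fin m)) □ (⊤ : SimpleGraph (Fin n))) := by
  exact box_decomp _ _ (top_fin_decomp m hm h1) (top_fin_decomp n hn h2)
end

section
/- If m and n are positive integers with m ≡ 9 (mod 16) and n ≡ 9 (mod 16), then the graph K_m □ K_n has an L_8-decomposition. -/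
open SimpleGraph

namespace SunletAux

/-! ### Edge list of `sunlet8` -/

/-- First endpoint of the `i`-th edge of `sunlet8`. -/
def eA : Fin 8 → Fin 8 := fun i =>
  if i.val < 4 then i else ⟨i.val - 4, Nat.lt_of_le_of_lt (Nat.sub_le _ _) i.isLt⟩

/-- Second endpoint of the `i`-th edge of `sunlet8`. -/
def eB : Fin 8 → Fin 8 := fun i =>
  if i.val < 4 then ⟨(i.val + 1) % 4, Nat.lt_of_lt_of_le (Nat.mod_lt _ (by norm_num)) (by norm_num)⟩
  else i

lemma sunlet8_adj_iff : ∀ x y : Fin 8,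
    sunlet8.Adj x y ↔ ∃ i : Fin 8, s(x, y) = s(eA i, eB i) := by
  simp only [sunlet8, SimpleGraph.fromRel_adj]
  decide

/-- A "part": the image of `sunlet8`'s edges under a vertex map. -/
def partOf {W : Type*} (f : Fin 8 → W) : Set (Sym2 W) := Sym2.map f '' sunlet8.edgeSet

lemma mem_partOf {W : Type*} (f : Fin 8 → W) (e : Sym2 W) :
    e ∈ partOf f ↔ ∃ i : Fin 8, e = s(f (eA i), f (eB i)) := by
  constructor
  · rintro ⟨e', he', rfl⟩
    revert he'
    induction e' using Sym2.ind with
    | _ x y =>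
      intro he'
      rw [SimpleGraph.mem_edgeSet] at he'
      obtain ⟨i, hi⟩ := (sunlet8_adj_iff x y).1 he'
      exact ⟨i, by rw [hi, Sym2.map_pair_eq]⟩
  · rintro ⟨i, rfl⟩
    exact ⟨s(eA i, eB i), sunlet8.mem_edgeSet.2 ((sunlet8_adj_iff _ _).2 ⟨i, rfl⟩),
      Sym2.map_pair_eq f _ _⟩

/-! ### ZMod cast toolkit -/

lemma castinj {M x y : ℕ} (hx : x < M) (hy : y < M) (h : (x : ZMod M) = y) : x = y := by
  haveI : NeZero M := ⟨by omega⟩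
  rw [← ZMod.val_cast_of_lt hx, ← ZMod.val_cast_of_lt hy, h]

lemma castsub (M x : ℕ) (hx : x ≤ M) : ((M - x : ℕ) : ZMod M) = -(x : ZMod M) := by
  have h : ((M - x : ℕ) : ZMod M) + (x : ZMod M) = 0 := by
    rw [← Nat.cast_add, Nat.sub_add_cancel hx]
    exact ZMod.natCast_self M
  exact eq_neg_of_add_eq_zero_left h

lemma knz {M k : ℕ} (h1 : 1 ≤ k) (h2 : 2 * k < M) : (k : ZMod M) ≠ 0 := by
  intro h
  have : k = 0 := castinj (M := M) (x := k) (y := 0) (by omega) (by omega) (by rw [h]; simp)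
  omega

lemma kneg {M k : ℕ} (h1 : 1 ≤ k) (h2 : 2 * k < M) : (k : ZMod M) ≠ -(k : ZMod M) := by
  intro h
  rw [← castsub M k (by omega)] at h
  have := castinj (by omega) (by omega) h
  omega

lemma zkey' {M k k' : ℕ} (h1 : 1 ≤ k) (h2 : 2 * k < M) (h1' : 1 ≤ k') (h2' : 2 * k' < M)
    (h : (k : ZMod M) = (k' : ZMod M) ∨ (k : ZMod M) = -(k' : ZMod M) ∨
         -(k : ZMod M) = (k' : ZMod M) ∨ -(k : ZMod M) = -(k' : ZMod M)) : k = k' := by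
  rcases h with h | h | h | h
  · exact castinj (by omega) (by omega) h
  · rw [← castsub M k' (by omega)] at h
    have := castinj (by omega) (by omega) h
    omega
  · rw [← castsub M k (by omega)] at h
    have := castinj (by omega) (by omega) h
    omega
  · rw [← castsub M k (by omega), ← castsub M k' (by omega)] at h
    have := castinj (by omega) (by omega) h
    omega

lemma classify (M : ℕ) (hModd : M % 2 = 1) (hM9 : 9 ≤ M) (d : ZMod M) (hd : d ≠ 0) :
    1 ≤ min d.val (M - d.val) ∧ 2 * min d.val (M - d.val) < M ∧
      (d = ((min d.val (M - d.val) : ℕ) : ZMod M) ∨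
       d = -((min d.val (M - d.val) : ℕ) : ZMod M)) := by
  haveI : NeZero M := ⟨by omega⟩
  have hlt : d.val < M := ZMod.val_lt d
  have h0 : d.val ≠ 0 := fun h => hd (by rwa [ZMod.val_eq_zero] at h)
  have hdv : ((d.val : ℕ) : ZMod M) = d := ZMod.natCast_rightInverse d
  rcases le_total d.val (M - d.val) with hle | hle
  · rw [min_eq_left hle]
    exact ⟨by omega, by omega, Or.inl hdv.symm⟩
  · rw [min_eq_right hle]
    refine ⟨by omega, by omega, Or.inr ?_⟩
    rw [castsub M d.val hlt.le, neg_neg, hdv]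

/-! ### The base blocks -/

/-- Index of base blocks: a mixed block, horizontal blocks, vertical blocks. -/
inductive BIdx : Type
  | mix : BIdx
  | hor : ℕ → BIdx
  | ver : ℕ → BIdx

def valid (a b : ℕ) : BIdx → Prop
  | .mix => True
  | .hor j => j < a
  | .ver j => j < b

/-- Coordinates (as naturals) of the 8 vertices of a pure block with classes
`8j+5, …, 8j+12`. -/
def hco (m j : ℕ) (i : Fin 8) : ℕ :=
  if i.val = 0 then 0
  else if i.val = 1 then 8 * j + 9
  else if i.val = 2 then m - 1
  else if i.val = 3 then m - (8 * j + 12)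
  else if i.val = 4 then m - (8 * j + 5)
  else if i.val = 5 then 16 * j + 15
  else if i.val = 6 then 8 * j + 6
  else m - (16 * j + 20)

/-- First coordinates of the mixed block vertices. -/
def mco1 (m : ℕ) (i : Fin 8) : ℕ :=
  if i.val % 4 = 0 then 0
  else if i.val % 4 = 1 then 1
  else if i.val % 4 = 2 then m - 1
  else m - 4

/-- Second coordinates of the mixed block vertices. -/
def mco2 (i : Fin 8) : ℕ := if i.val < 4 then 0 else i.val - 3

/-- The vertex maps of the base blocks. -/
def fB (m n : ℕ) : BIdx → Fin 8 → ZMod m × ZMod n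
  | .mix => fun i => ((mco1 m i : ZMod m), (mco2 i : ZMod n))
  | .hor j => fun i => ((hco m j i : ZMod m), 0)
  | .ver j => fun i => (0, (hco n j i : ZMod n))

/-- `true` = the `i`-th edge of block `idx` is horizontal. -/
def side : BIdx → Fin 8 → Bool
  | .mix => fun i => decide (i.val < 4)
  | .hor _ => fun _ => true
  | .ver _ => fun _ => false

def clsw (i : Fin 8) : ℕ := if i.val < 4 then i.val + 9 else i.val + 1

/-- The difference class of the `i`-th edge of block `idx`. -/
def cls : BIdx → Fin 8 → ℕ
  | .mix => fun i => i.val % 4 + 1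
  | .hor j => fun i => 8 * j + clsw i
  | .ver j => fun i => 8 * j + clsw i

/-! ### Difference spec of the base edges -/

lemma DspecH (a b m n : ℕ) (hm : m = 16 * a + 9) (idx : BIdx) (i : Fin 8)
    (hv : valid a b idx) (hs : side idx i = true) :
    1 ≤ cls idx i ∧ 2 * cls idx i < m ∧
      (fB m n idx (eB i) - fB m n idx (eA i) = (((cls idx i : ℕ) : ZMod m), 0) ∨
       fB m n idx (eB i) - fB m n idx (eA i) = (-((cls idx i : ℕ) : ZMod m), 0)) := by
  cases idx with
  | ver j => simp [side] at hs
  | mix =>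
    rcases i with ⟨iv, hiv⟩
    interval_cases iv
    · refine ⟨by norm_num [cls], by norm_num [cls]; omega, Or.inl ?_⟩
      norm_num [fB, eA, eB, mco1, mco2, cls, Prod.mk_sub_mk, Prod.mk.injEq]
    · refine ⟨by norm_num [cls], by norm_num [cls]; omega, Or.inr ?_⟩
      norm_num [fB, eA, eB, mco1, mco2, cls, Prod.mk_sub_mk, Prod.mk.injEq]
      rw [castsub m 1 (by omega)]
      push_cast
      ring
    · refine ⟨by norm_num [cls], by norm_num [cls]; omega, Or.inr ?_⟩
      norm_num [fB, eA, eB, mco1, mco2, cls, Prod.mk_sub_mk, Prod.mk.injEq]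
      rw [castsub m 1 (by omega), castsub m 4 (by omega)]
      push_cast
      ring
    · refine ⟨by norm_num [cls], by norm_num [cls]; omega, Or.inl ?_⟩
      norm_num [fB, eA, eB, mco1, mco2, cls, Prod.mk_sub_mk, Prod.mk.injEq]
      rw [castsub m 4 (by omega)]
      push_cast
      ring
    · simp [side] at hs
    · simp [side] at hs
    · simp [side] at hs
    · simp [side] at hs
  | hor j =>
    have hj : j < a := hv
    rcases i with ⟨iv, hiv⟩
    interval_cases iv
    · refine ⟨by norm_num [cls, clsw], by norm_num [cls, clsw]; omega, Or.inl ?_⟩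
      norm_num [fB, eA, eB, hco, cls, clsw, Prod.mk_sub_mk, Prod.mk.injEq]
    · refine ⟨by norm_num [cls, clsw], by norm_num [cls, clsw]; omega, Or.inr ?_⟩
      norm_num [fB, eA, eB, hco, cls, clsw, Prod.mk_sub_mk, Prod.mk.injEq]
      rw [castsub m 1 (by omega)]
      push_cast
      ring
    · refine ⟨by norm_num [cls, clsw], by norm_num [cls, clsw]; omega, Or.inr ?_⟩
      norm_num [fB, eA, eB, hco, cls, clsw, Prod.mk_sub_mk, Prod.mk.injEq]
      rw [castsub m 1 (by omega), castsub m (8 * j + 12) (by omega)]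
      push_cast
      ring
    · refine ⟨by norm_num [cls, clsw], by norm_num [cls, clsw]; omega, Or.inl ?_⟩
      norm_num [fB, eA, eB, hco, cls, clsw, Prod.mk_sub_mk, Prod.mk.injEq]
      rw [castsub m (8 * j + 12) (by omega)]
      push_cast
      ring
    · refine ⟨by norm_num [cls, clsw], by norm_num [cls, clsw]; omega, Or.inr ?_⟩
      norm_num [fB, eA, eB, hco, cls, clsw, Prod.mk_sub_mk, Prod.mk.injEq]
      rw [castsub m (8 * j + 5) (by omega)]
      push_cast
      ring
    · refine ⟨by norm_num [cls, clsw], by norm_num [cls, clsw]; omega, Or.inl ?_⟩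
      norm_num [fB, eA, eB, hco, cls, clsw, Prod.mk_sub_mk, Prod.mk.injEq]
      push_cast
      ring
    · refine ⟨by norm_num [cls, clsw], by norm_num [cls, clsw]; omega, Or.inl ?_⟩
      norm_num [fB, eA, eB, hco, cls, clsw, Prod.mk_sub_mk, Prod.mk.injEq]
      rw [castsub m 1 (by omega)]
      push_cast
      ring
    · refine ⟨by norm_num [cls, clsw], by norm_num [cls, clsw]; omega, Or.inr ?_⟩
      norm_num [fB, eA, eB, hco, cls, clsw, Prod.mk_sub_mk, Prod.mk.injEq]
      rw [castsub m (8 * j + 12) (by omega), castsub m (16 * j + 20) (by omega)]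
      push_cast
      ring

lemma DspecV (a b m n : ℕ) (hn : n = 16 * b + 9) (idx : BIdx) (i : Fin 8)
    (hv : valid a b idx) (hs : side idx i = false) :
    1 ≤ cls idx i ∧ 2 * cls idx i < n ∧
      (fB m n idx (eB i) - fB m n idx (eA i) = (0, ((cls idx i : ℕ) : ZMod n)) ∨
       fB m n idx (eB i) - fB m n idx (eA i) = (0, -((cls idx i : ℕ) : ZMod n))) := by
  cases idx with
  | hor j => simp [side] at hs
  | mix =>
    rcases i with ⟨iv, hiv⟩
    interval_cases iv
    · simp [side] at hs
    · simp [side] at hs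
    · simp [side] at hs
    · simp [side] at hs
    · refine ⟨by norm_num [cls], by norm_num [cls]; omega, Or.inl ?_⟩
      norm_num [fB, eA, eB, mco1, mco2, cls, Prod.mk_sub_mk, Prod.mk.injEq]
    · refine ⟨by norm_num [cls], by norm_num [cls]; omega, Or.inl ?_⟩
      norm_num [fB, eA, eB, mco1, mco2, cls, Prod.mk_sub_mk, Prod.mk.injEq]
    · refine ⟨by norm_num [cls], by norm_num [cls]; omega, Or.inl ?_⟩
      norm_num [fB, eA, eB, mco1, mco2, cls, Prod.mk_sub_mk, Prod.mk.injEq]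
    · refine ⟨by norm_num [cls], by norm_num [cls]; omega, Or.inl ?_⟩
      norm_num [fB, eA, eB, mco1, mco2, cls, Prod.mk_sub_mk, Prod.mk.injEq]
  | ver j =>
    have hj : j < b := hv
    rcases i with ⟨iv, hiv⟩
    interval_cases iv
    · refine ⟨by norm_num [cls, clsw], by norm_num [cls, clsw]; omega, Or.inl ?_⟩
      norm_num [fB, eA, eB, hco, cls, clsw, Prod.mk_sub_mk, Prod.mk.injEq]
    · refine ⟨by norm_num [cls, clsw], by norm_num [cls, clsw]; omega, Or.inr ?_⟩
      norm_num [fB, eA, eB, hco, cls, clsw, Prod.mk_sub_mk, Prod.mk.injEq]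
      rw [castsub n 1 (by omega)]
      push_cast
      ring
    · refine ⟨by norm_num [cls, clsw], by norm_num [cls, clsw]; omega, Or.inr ?_⟩
      norm_num [fB, eA, eB, hco, cls, clsw, Prod.mk_sub_mk, Prod.mk.injEq]
      rw [castsub n 1 (by omega), castsub n (8 * j + 12) (by omega)]
      push_cast
      ring
    · refine ⟨by norm_num [cls, clsw], by norm_num [cls, clsw]; omega, Or.inl ?_⟩
      norm_num [fB, eA, eB, hco, cls, clsw, Prod.mk_sub_mk, Prod.mk.injEq]
      rw [castsub n (8 * j + 12) (by omega)]
      push_cast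
      ring
    · refine ⟨by norm_num [cls, clsw], by norm_num [cls, clsw]; omega, Or.inr ?_⟩
      norm_num [fB, eA, eB, hco, cls, clsw, Prod.mk_sub_mk, Prod.mk.injEq]
      rw [castsub n (8 * j + 5) (by omega)]
      push_cast
      ring
    · refine ⟨by norm_num [cls, clsw], by norm_num [cls, clsw]; omega, Or.inl ?_⟩
      norm_num [fB, eA, eB, hco, cls, clsw, Prod.mk_sub_mk, Prod.mk.injEq]
      push_cast
      ring
    · refine ⟨by norm_num [cls, clsw], by norm_num [cls, clsw]; omega, Or.inl ?_⟩
      norm_num [fB, eA, eB, hco, cls, clsw, Prod.mk_sub_mk, Prod.mk.injEq]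
      rw [castsub n 1 (by omega)]
      push_cast
      ring
    · refine ⟨by norm_num [cls, clsw], by norm_num [cls, clsw]; omega, Or.inr ?_⟩
      norm_num [fB, eA, eB, hco, cls, clsw, Prod.mk_sub_mk, Prod.mk.injEq]
      rw [castsub n (8 * j + 12) (by omega), castsub n (16 * j + 20) (by omega)]
      push_cast
      ring

/-! ### Class injectivity -/

lemma cls_inj (a b : ℕ) {idx idx' : BIdx} {i i' : Fin 8}
    (hv : valid a b idx) (hv' : valid a b idx')
    (hs : side idx i = side idx' i') (hc : cls idx i = cls idx' i') :
    idx = idx' ∧ i = i' := by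
  have hb : i.val < 8 := i.isLt
  have hb' : i'.val < 8 := i'.isLt
  cases idx <;> cases idx'
  · -- mix / mix
    have hs' : i.val < 4 ↔ i'.val < 4 := decide_eq_decide.mp hs
    have hc' : i.val % 4 + 1 = i'.val % 4 + 1 := hc
    exact ⟨rfl, Fin.ext (by omega)⟩
  · -- mix / hor
    exfalso
    rename_i j
    have hc' : i.val % 4 + 1
        = 8 * j + (if i'.val < 4 then i'.val + 9 else i'.val + 1) := hc
    split_ifs at hc' <;> omega
  · -- mix / ver
    exfalso
    rename_i j
    have hc' : i.val % 4 + 1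
        = 8 * j + (if i'.val < 4 then i'.val + 9 else i'.val + 1) := hc
    split_ifs at hc' <;> omega
  · -- hor / mix
    exfalso
    rename_i j
    have hc' : 8 * j + (if i.val < 4 then i.val + 9 else i.val + 1)
        = i'.val % 4 + 1 := hc
    split_ifs at hc' <;> omega
  · -- hor / hor
    rename_i j j'
    have hc' : 8 * j + (if i.val < 4 then i.val + 9 else i.val + 1)
        = 8 * j' + (if i'.val < 4 then i'.val + 9 else i'.val + 1) := hc
    have key : j = j' ∧ i.val = i'.val := by split_ifs at hc' <;> omega
    exact ⟨by rw [key.1], Fin.ext key.2⟩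
  · -- hor / ver
    simp [side] at hs
  · -- ver / mix
    exfalso
    rename_i j
    have hc' : 8 * j + (if i.val < 4 then i.val + 9 else i.val + 1)
        = i'.val % 4 + 1 := hc
    split_ifs at hc' <;> omega
  · -- ver / hor
    simp [side] at hs
  · -- ver / ver
    rename_i j j'
    have hc' : 8 * j + (if i.val < 4 then i.val + 9 else i.val + 1)
        = 8 * j' + (if i'.val < 4 then i'.val + 9 else i'.val + 1) := hc
    have key : j = j' ∧ i.val = i'.val := by split_ifs at hc' <;> omega
    exact ⟨by rw [key.1], Fin.ext key.2⟩

/-! ### D-injectivity -/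

lemma D_inj (a b m n : ℕ) (hm : m = 16 * a + 9) (hn : n = 16 * b + 9)
    {idx idx' : BIdx} {i i' : Fin 8}
    (hv : valid a b idx) (hv' : valid a b idx')
    (h : fB m n idx (eB i) - fB m n idx (eA i) = fB m n idx' (eB i') - fB m n idx' (eA i') ∨
         fB m n idx (eB i) - fB m n idx (eA i) =
           -(fB m n idx' (eB i') - fB m n idx' (eA i'))) :
    idx = idx' ∧ i = i' := by
  cases hsi : side idx i <;> cases hsi' : side idx' i'
  · -- both vertical
    obtain ⟨h1, h2, hD⟩ := DspecV a b m n hn idx i hv hsi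
    obtain ⟨h1', h2', hD'⟩ := DspecV a b m n hn idx' i' hv' hsi'
    refine cls_inj a b hv hv' (hsi.trans hsi'.symm) ?_
    rcases h with h | h <;> rcases hD with d1 | d1 <;> rcases hD' with d2 | d2 <;>
        rw [d1, d2] at h <;>
        simp only [Prod.neg_mk, Prod.mk.injEq, neg_zero, neg_neg] at h <;>
      exact zkey' h1 h2 h1' h2' (by tauto)
  · -- vertical vs horizontal
    obtain ⟨h1, h2, hD⟩ := DspecV a b m n hn idx i hv hsi
    obtain ⟨h1', h2', hD'⟩ := DspecH a b m n hm idx' i' hv' hsi'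
    exfalso
    rcases h with h | h <;> rcases hD with d1 | d1 <;> rcases hD' with d2 | d2 <;>
        rw [d1, d2] at h <;>
        simp only [Prod.neg_mk, Prod.mk.injEq, neg_zero, neg_neg, neg_eq_zero, zero_eq_neg] at h <;>
      first
        | exact absurd h.1 (knz h1' h2')
        | exact absurd h.1.symm (knz h1' h2')
  · -- horizontal vs vertical
    obtain ⟨h1, h2, hD⟩ := DspecH a b m n hm idx i hv hsi
    obtain ⟨h1', h2', hD'⟩ := DspecV a b m n hn idx' i' hv' hsi'
    exfalso
    rcases h with h | h <;> rcases hD with d1 | d1 <;> rcases hD' with d2 | d2 <;>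
        rw [d1, d2] at h <;>
        simp only [Prod.neg_mk, Prod.mk.injEq, neg_zero, neg_neg, neg_eq_zero, zero_eq_neg] at h <;>
      first
        | exact absurd h.1 (knz h1 h2)
        | exact absurd h.1.symm (knz h1 h2)
  · -- both horizontal
    obtain ⟨h1, h2, hD⟩ := DspecH a b m n hm idx i hv hsi
    obtain ⟨h1', h2', hD'⟩ := DspecH a b m n hm idx' i' hv' hsi'
    refine cls_inj a b hv hv' (hsi.trans hsi'.symm) ?_
    rcases h with h | h <;> rcases hD with d1 | d1 <;> rcases hD' with d2 | d2 <;>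
        rw [d1, d2] at h <;>
        simp only [Prod.neg_mk, Prod.mk.injEq, neg_zero, neg_neg] at h <;>
      exact zkey' h1 h2 h1' h2' (by tauto)

lemma D_ne_neg (a b m n : ℕ) (hm : m = 16 * a + 9) (hn : n = 16 * b + 9)
    {idx : BIdx} (hv : valid a b idx) (i : Fin 8) :
    fB m n idx (eB i) - fB m n idx (eA i) ≠
      -(fB m n idx (eB i) - fB m n idx (eA i)) := by
  intro hEq
  cases hsi : side idx i
  · obtain ⟨h1, h2, hD⟩ := DspecV a b m n hn idx i hv hsi
    rcases hD with d | d <;> rw [d] at hEq <;>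
      simp only [Prod.neg_mk, Prod.mk.injEq, neg_zero, neg_neg] at hEq
    · exact kneg h1 h2 hEq.2
    · exact kneg h1 h2 hEq.2.symm
  · obtain ⟨h1, h2, hD⟩ := DspecH a b m n hm idx i hv hsi
    rcases hD with d | d <;> rw [d] at hEq <;>
      simp only [Prod.neg_mk, Prod.mk.injEq, neg_zero, neg_neg] at hEq
    · exact kneg h1 h2 hEq.1
    · exact kneg h1 h2 hEq.1.symm

/-! ### Injectivity of the base maps -/

lemma hco_lt (a m j : ℕ) (hm : m = 16 * a + 9) (hj : j < a) (i : Fin 8) : hco m j i < m := by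
  simp only [hco]
  split_ifs <;> omega

lemma mco1_lt (m : ℕ) (hm9 : 9 ≤ m) (i : Fin 8) : mco1 m i < m := by
  simp only [mco1]
  split_ifs <;> omega

lemma mco2_lt (n : ℕ) (hn9 : 9 ≤ n) (i : Fin 8) : mco2 i < n := by
  have := i.isLt
  simp only [mco2]
  split_ifs <;> omega

set_option maxHeartbeats 1600000 in
lemma fB_inj (a b m n : ℕ) (hm : m = 16 * a + 9) (hn : n = 16 * b + 9)
    {idx : BIdx} (hv : valid a b idx) : Function.Injective (fB m n idx) := by
  intro i i' h
  have hb : i.val < 8 := i.isLt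
  have hb' : i'.val < 8 := i'.isLt
  cases idx with
  | hor j =>
    have hj : j < a := hv
    simp only [fB, Prod.mk.injEq] at h
    have h2 : hco m j i = hco m j i' :=
      castinj (hco_lt a m j hm hj i) (hco_lt a m j hm hj i') h.1
    have hval : i.val = i'.val := by
      simp only [hco] at h2
      split_ifs at h2 <;> omega
    exact Fin.ext hval
  | ver j =>
    have hj : j < b := hv
    simp only [fB, Prod.mk.injEq] at h
    have h2 : hco n j i = hco n j i' :=
      castinj (hco_lt b n j hn hj i) (hco_lt b n j hn hj i') h.2
    have hval : i.val = i'.val := by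
      simp only [hco] at h2
      split_ifs at h2 <;> omega
    exact Fin.ext hval
  | mix =>
    simp only [fB, Prod.mk.injEq] at h
    have e1 : mco1 m i = mco1 m i' :=
      castinj (mco1_lt m (by omega) i) (mco1_lt m (by omega) i') h.1
    have e2 : mco2 i = mco2 i' :=
      castinj (mco2_lt n (by omega) i) (mco2_lt n (by omega) i') h.2
    have hval : i.val = i'.val := by
      simp only [mco1, mco2] at e1 e2
      split_ifs at e1 e2 <;> omega
    exact Fin.ext hval

/-! ### Every part is a set of edges -/

lemma part_sub (a b m n : ℕ) (hm : m = 16 * a + 9) (hn : n = 16 * b + 9)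
    {idx : BIdx} (hv : valid a b idx) (g : ZMod m × ZMod n) :
    partOf (fun i => fB m n idx i + g) ⊆
      ((⊤ : SimpleGraph (ZMod m)) □ (⊤ : SimpleGraph (ZMod n))).edgeSet := by
  intro e he
  rw [mem_partOf] at he
  obtain ⟨i, rfl⟩ := he
  rw [SimpleGraph.mem_edgeSet, SimpleGraph.boxProd_adj]
  simp only [SimpleGraph.top_adj, Prod.fst_add, Prod.snd_add]
  cases hsi : side idx i
  · obtain ⟨h1, h2, hD⟩ := DspecV a b m n hn idx i hv hsi
    have c1 : (fB m n idx (eB i)).1 - (fB m n idx (eA i)).1 = 0 := by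
      rcases hD with d | d <;> rw [← Prod.fst_sub, d]
    have hne : (fB m n idx (eB i)).2 - (fB m n idx (eA i)).2 ≠ 0 := by
      rcases hD with d | d <;> rw [← Prod.snd_sub, d]
      · exact knz h1 h2
      · exact neg_ne_zero.mpr (knz h1 h2)
    right
    exact ⟨fun hEq => hne (by linear_combination -hEq), by linear_combination -c1⟩
  · obtain ⟨h1, h2, hD⟩ := DspecH a b m n hm idx i hv hsi
    have c2 : (fB m n idx (eB i)).2 - (fB m n idx (eA i)).2 = 0 := by
      rcases hD with d | d <;> rw [← Prod.snd_sub, d]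
    have hne : (fB m n idx (eB i)).1 - (fB m n idx (eA i)).1 ≠ 0 := by
      rcases hD with d | d <;> rw [← Prod.fst_sub, d]
      · exact knz h1 h2
      · exact neg_ne_zero.mpr (knz h1 h2)
    left
    exact ⟨fun hEq => hne (by linear_combination -hEq), by linear_combination -c2⟩

/-! ### Finding the block for a given class -/

lemma find_hor (a b m : ℕ) (hm : m = 16 * a + 9) (k : ℕ) (h1 : 1 ≤ k) (h2 : 2 * k < m) :
    ∃ (idx : BIdx) (i : Fin 8), valid a b idx ∧ side idx i = true ∧ cls idx i = k := by
  by_cases hk : k ≤ 4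
  · refine ⟨.mix, ⟨k - 1, by omega⟩, trivial, ?_, ?_⟩
    · show decide (k - 1 < 4) = true
      simp only [decide_eq_true_eq]
      omega
    · show (k - 1) % 4 + 1 = k
      omega
  · push_neg at hk
    refine ⟨.hor ((k - 5) / 8),
      ⟨(k - 8 * ((k - 5) / 8) - 1) % 8, Nat.mod_lt _ (by norm_num)⟩, ?_, rfl, ?_⟩
    · show (k - 5) / 8 < a
      omega
    · show 8 * ((k - 5) / 8) +
        (if (k - 8 * ((k - 5) / 8) - 1) % 8 < 4 then (k - 8 * ((k - 5) / 8) - 1) % 8 + 9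
         else (k - 8 * ((k - 5) / 8) - 1) % 8 + 1) = k
      split_ifs <;> omega

lemma find_ver (a b n : ℕ) (hn : n = 16 * b + 9) (k : ℕ) (h1 : 1 ≤ k) (h2 : 2 * k < n) :
    ∃ (idx : BIdx) (i : Fin 8), valid a b idx ∧ side idx i = false ∧ cls idx i = k := by
  by_cases hk : k ≤ 4
  · refine ⟨.mix, ⟨k + 3, by omega⟩, trivial, ?_, ?_⟩
    · show decide (k + 3 < 4) = false
      simp only [decide_eq_false_iff_not]
      omega
    · show (k + 3) % 4 + 1 = k
      omega
  · push_neg at hk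
    refine ⟨.ver ((k - 5) / 8),
      ⟨(k - 8 * ((k - 5) / 8) - 1) % 8, Nat.mod_lt _ (by norm_num)⟩, ?_, rfl, ?_⟩
    · show (k - 5) / 8 < b
      omega
    · show 8 * ((k - 5) / 8) +
        (if (k - 8 * ((k - 5) / 8) - 1) % 8 < 4 then (k - 8 * ((k - 5) / 8) - 1) % 8 + 9
         else (k - 8 * ((k - 5) / 8) - 1) % 8 + 1) = k
      split_ifs <;> omega

/-! ### Building a part containing a given edge -/

lemma build_mem (m n : ℕ) (idx : BIdx) (i : Fin 8) (u v : ZMod m × ZMod n)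
    (h : fB m n idx (eB i) - fB m n idx (eA i) = v - u) :
    s(u, v) ∈ partOf (fun t => fB m n idx t + (u - fB m n idx (eA i))) := by
  rw [mem_partOf]
  refine ⟨i, ?_⟩
  show s(u, v) = s(fB m n idx (eA i) + (u - fB m n idx (eA i)),
                   fB m n idx (eB i) + (u - fB m n idx (eA i)))
  rw [show fB m n idx (eA i) + (u - fB m n idx (eA i)) = u by ring,
      show fB m n idx (eB i) + (u - fB m n idx (eA i)) = v by linear_combination h]

lemma part_exists (a b m n : ℕ) (hm : m = 16 * a + 9) (hn : n = 16 * b + 9)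
    {e : Sym2 (ZMod m × ZMod n)}
    (he : e ∈ ((⊤ : SimpleGraph (ZMod m)) □ (⊤ : SimpleGraph (ZMod n))).edgeSet) :
    ∃ (idx : BIdx) (g : ZMod m × ZMod n),
      valid a b idx ∧ e ∈ partOf (fun i => fB m n idx i + g) := by
  revert he
  induction e using Sym2.ind with
  | _ u v =>
    intro he
    rw [SimpleGraph.mem_edgeSet, SimpleGraph.boxProd_adj] at he
    simp only [SimpleGraph.top_adj] at he
    rcases he with ⟨hne, heq⟩ | ⟨hne, heq⟩
    · -- horizontal edge
      have hd0 : v.1 - u.1 ≠ 0 := sub_ne_zero.2 (Ne.symm hne)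
      obtain ⟨hk1, hk2, hk3⟩ := classify m (by omega) (by omega) (v.1 - u.1) hd0
      set k := min (v.1 - u.1).val (m - (v.1 - u.1).val) with hkdef
      obtain ⟨idx, i, hv, hsi, hci⟩ := find_hor a b m hm k hk1 hk2
      obtain ⟨hb1, hb2, hD⟩ := DspecH a b m n hm idx i hv hsi
      rw [hci] at hD
      have hvu : v - u = (v.1 - u.1, 0) := by
        rw [Prod.ext_iff]
        refine ⟨rfl, ?_⟩
        show v.2 - u.2 = 0
        rw [heq]
        ring
      have huv : u - v = (-(v.1 - u.1), 0) := by
        rw [Prod.ext_iff]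
        constructor
        · show u.1 - v.1 = -(v.1 - u.1); ring
        · show u.2 - v.2 = 0; rw [heq]; ring
      have hDd : fB m n idx (eB i) - fB m n idx (eA i) = v - u ∨
          fB m n idx (eB i) - fB m n idx (eA i) = u - v := by
        rcases hk3 with h | h <;> rcases hD with h' | h'
        · left; rw [hvu, h]; exact h'
        · right; rw [huv, h]; exact h'
        · right; rw [huv, h, neg_neg]; exact h'
        · left; rw [hvu, h]; exact h'
      rcases hDd with h | h
      · exact ⟨idx, u - fB m n idx (eA i), hv, build_mem m n idx i u v h⟩
      · refine ⟨idx, v - fB m n idx (eA i), hv, ?_⟩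
        rw [Sym2.eq_swap]
        exact build_mem m n idx i v u h
    · -- vertical edge
      have hd0 : v.2 - u.2 ≠ 0 := sub_ne_zero.2 (Ne.symm hne)
      obtain ⟨hk1, hk2, hk3⟩ := classify n (by omega) (by omega) (v.2 - u.2) hd0
      set k := min (v.2 - u.2).val (n - (v.2 - u.2).val) with hkdef
      obtain ⟨idx, i, hv, hsi, hci⟩ := find_ver a b n hn k hk1 hk2
      obtain ⟨hb1, hb2, hD⟩ := DspecV a b m n hn idx i hv hsi
      rw [hci] at hD
      have hvu : v - u = (0, v.2 - u.2) := by
        rw [Prod.ext_iff]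
        refine ⟨?_, rfl⟩
        show v.1 - u.1 = 0
        rw [heq]
        ring
      have huv : u - v = (0, -(v.2 - u.2)) := by
        rw [Prod.ext_iff]
        constructor
        · show u.1 - v.1 = 0; rw [heq]; ring
        · show u.2 - v.2 = -(v.2 - u.2); ring
      have hDd : fB m n idx (eB i) - fB m n idx (eA i) = v - u ∨
          fB m n idx (eB i) - fB m n idx (eA i) = u - v := by
        rcases hk3 with h | h <;> rcases hD with h' | h'
        · left; rw [hvu, h]; exact h'
        · right; rw [huv, h]; exact h'
        · right; rw [huv, h, neg_neg]; exact h'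
        · left; rw [hvu, h]; exact h'
      rcases hDd with h | h
      · exact ⟨idx, u - fB m n idx (eA i), hv, build_mem m n idx i u v h⟩
      · refine ⟨idx, v - fB m n idx (eA i), hv, ?_⟩
        rw [Sym2.eq_swap]
        exact build_mem m n idx i v u h

/-! ### Uniqueness -/

lemma part_unique (a b m n : ℕ) (hm : m = 16 * a + 9) (hn : n = 16 * b + 9)
    {idx idx' : BIdx} (hv : valid a b idx) (hv' : valid a b idx')
    {g g' : ZMod m × ZMod n} {e : Sym2 (ZMod m × ZMod n)}
    (h1 : e ∈ partOf (fun i => fB m n idx i + g))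
    (h2 : e ∈ partOf (fun i => fB m n idx' i + g')) :
    idx = idx' ∧ g = g' := by
  rw [mem_partOf] at h1 h2
  obtain ⟨i, rfl⟩ := h1
  obtain ⟨i', hE⟩ := h2
  rw [Sym2.eq_iff] at hE
  rcases hE with ⟨hA, hB⟩ | ⟨hA, hB⟩
  · have hD : fB m n idx (eB i) - fB m n idx (eA i)
        = fB m n idx' (eB i') - fB m n idx' (eA i') := by linear_combination hB - hA
    obtain ⟨rfl, rfl⟩ := D_inj a b m n hm hn hv hv' (Or.inl hD)
    exact ⟨rfl, by linear_combination hA⟩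
  · have hD : fB m n idx (eB i) - fB m n idx (eA i)
        = -(fB m n idx' (eB i') - fB m n idx' (eA i')) := by linear_combination hB - hA
    obtain ⟨rfl, rfl⟩ := D_inj a b m n hm hn hv hv' (Or.inr hD)
    exact absurd hD (D_ne_neg a b m n hm hn hv i)

/-! ### The core decomposition theorem -/

theorem core (a b m n : ℕ) (hm : m = 16 * a + 9) (hn : n = 16 * b + 9) :
    HasSunletDecomposition ((⊤ : SimpleGraph (ZMod m)) □ (⊤ : SimpleGraph (ZMod n))) := by
  refine ⟨{ s | ∃ idx g, valid a b idx ∧ s = partOf (fun i => fB m n idx i + g) }, ?_, ?_, ?_⟩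
  · ext e
    simp only [Set.mem_sUnion, Set.mem_setOf_eq]
    constructor
    · rintro ⟨s, ⟨idx, g, hv, rfl⟩, he⟩
      exact part_sub a b m n hm hn hv g he
    · intro he
      obtain ⟨idx, g, hv, hmem⟩ := part_exists a b m n hm hn he
      exact ⟨_, ⟨idx, g, hv, rfl⟩, hmem⟩
  · rintro s ⟨idx, g, hv, rfl⟩ t ⟨idx', g', hv', rfl⟩ hst
    simp only [Function.onFun, id_eq]
    refine Set.disjoint_left.mpr fun e hes het => ?_
    obtain ⟨he1, he2⟩ := part_unique a b m n hm hn hv hv' hes het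
    exact hst (by rw [he1, he2])
  · rintro s ⟨idx, g, hv, rfl⟩
    exact ⟨_, (add_left_injective g).comp (fB_inj a b m n hm hn hv), rfl⟩

/-! ### Transport along graph isomorphisms -/

lemma decomp_map {α β : Type*} {G : SimpleGraph α} {G' : SimpleGraph β} (φ : G ≃g G')
    (h : HasSunletDecomposition G) : HasSunletDecomposition G' := by
  obtain ⟨P, hU, hD, hC⟩ := h
  have key : Sym2.map φ '' G.edgeSet = G'.edgeSet := by
    ext e
    constructor
    · rintro ⟨e', he', rfl⟩
      revert he'
      induction e' using Sym2.ind with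
      | _ x y =>
        intro he'
        rw [SimpleGraph.mem_edgeSet] at he'
        rw [Sym2.map_pair_eq, SimpleGraph.mem_edgeSet]
        exact φ.map_adj_iff.2 he'
    · intro he
      refine ⟨Sym2.map φ.symm e, ?_, ?_⟩
      · revert he
        induction e using Sym2.ind with
        | _ x y =>
          intro he
          rw [SimpleGraph.mem_edgeSet] at he
          rw [Sym2.map_pair_eq, SimpleGraph.mem_edgeSet]
          exact φ.symm.map_adj_iff.2 he
      · rw [Sym2.map_map]
        have : (⇑φ ∘ ⇑φ.symm) = id := by
          funext x
          simp
        rw [this, Sym2.map_id, id_eq]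
  refine ⟨(fun s => Sym2.map φ '' s) '' P, ?_, ?_, ?_⟩
  · rw [← Set.image_sUnion, hU, key]
  · rintro s ⟨s₀, hs₀, rfl⟩ t ⟨t₀, ht₀, rfl⟩ hst
    simp only [Function.onFun, id_eq]
    have hne : s₀ ≠ t₀ := by rintro rfl; exact hst rfl
    have hdis := hD hs₀ ht₀ hne
    simp only [Function.onFun, id_eq] at hdis
    exact Set.disjoint_image_of_injective (Sym2.map.injective φ.toEquiv.injective) hdis
  · rintro s ⟨s₀, hs₀, rfl⟩
    obtain ⟨f, hf, rfl⟩ := hC s₀ hs₀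
    refine ⟨⇑φ ∘ f, (φ.toEquiv.injective).comp hf, ?_⟩
    show Sym2.map ⇑φ '' (Sym2.map f '' sunlet8.edgeSet) = Sym2.map (⇑φ ∘ f) '' sunlet8.edgeSet
    rw [← Set.image_comp,
      show Sym2.map ⇑φ ∘ Sym2.map f = Sym2.map (⇑φ ∘ f) from funext fun e => Sym2.map_map e]

/-- Box product of two isomorphisms of graphs. -/
def box_iso {α β γ δ : Type*} {G : SimpleGraph α} {G' : SimpleGraph β}
    {H : SimpleGraph γ} {H' : SimpleGraph δ} (φ : G ≃g G') (ψ : H ≃g H') :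
    SimpleGraph.boxProd G H ≃g SimpleGraph.boxProd G' H' where
  toEquiv := φ.toEquiv.prodCongr ψ.toEquiv
  map_rel_iff' := by
    intro x y
    simp only [Equiv.prodCongr_apply, Prod.map, SimpleGraph.boxProd_adj]
    constructor
    · rintro (⟨hadj, heq⟩ | ⟨hadj, heq⟩)
      · exact Or.inl ⟨φ.map_adj_iff.1 hadj, ψ.toEquiv.injective heq⟩
      · exact Or.inr ⟨ψ.map_adj_iff.1 hadj, φ.toEquiv.injective heq⟩
    · rintro (⟨hadj, heq⟩ | ⟨hadj, heq⟩)
      · exact Or.inl ⟨φ.map_adj_iff.2 hadj, congrArg _ heq⟩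
      · exact Or.inr ⟨ψ.map_adj_iff.2 hadj, congrArg _ heq⟩

end SunletAux

theorem stmt_8 (m n : ℕ) (hm : 0 < m) (hn : 0 < n) (h1 : m % 16 = 9) (h2 : n % 16 = 9) :
    HasSunletDecomposition ((⊤ : SimpleGraph (Fin m)) □ (⊤ : SimpleGraph (Fin n))) := by
  obtain ⟨a, ha⟩ : ∃ a, m = 16 * a + 9 := ⟨m / 16, by omega⟩
  obtain ⟨b, hb⟩ : ∃ b, n = 16 * b + 9 := ⟨n / 16, by omega⟩
  haveI : NeZero m := ⟨by omega⟩
  haveI : NeZero n := ⟨by omega⟩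
  have em : ZMod m ≃ Fin m := Fintype.equivFinOfCardEq (ZMod.card m)
  have en : ZMod n ≃ Fin n := Fintype.equivFinOfCardEq (ZMod.card n)
  exact SunletAux.decomp_map
    (SunletAux.box_iso (Iso.completeGraph em) (Iso.completeGraph en))
    (SunletAux.core a b m n ha hb)
end

section
/- The graph obtained from the complete graph K_19 by deleting the three edges of a triangle (the edges of a complete subgraph K_3 on three of its vertices) has an L_8-decomposition. -/
open SimpleGraph

/-! ### Auxiliary material -/

instance inst_s19 : DecidableRel sunlet8.Adj := fun x y =>
  decidable_of_iff _ (SimpleGraph.fromRel_adj _ x y).symm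

def P8 : List (Fin 8 × Fin 8) := [(0,1),(1,2),(2,3),(3,0),(0,4),(1,5),(2,6),(3,7)]

def baseList : List (Sym2 (Fin 8)) := P8.map (fun p => s(p.1, p.2))

lemma sunlet8_mem (e : Sym2 (Fin 8)) : e ∈ sunlet8.edgeSet ↔ e ∈ baseList := by
  induction e with
  | _ x y => revert x y; decide

def F : Fin 21 → Fin 8 → Fin 19 :=
  ![![8, 2, 18, 5, 10, 16, 1, 9],
  ![5, 2, 15, 10, 11, 6, 1, 14],
  ![2, 10, 3, 4, 12, 0, 16, 14],
  ![2, 3, 9, 13, 14, 11, 12, 4],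
  ![2, 9, 0, 11, 17, 6, 14, 10],
  ![6, 8, 14, 5, 3, 13, 15, 7],
  ![18, 10, 16, 17, 13, 12, 6, 4],
  ![11, 1, 13, 14, 12, 17, 15, 3],
  ![10, 13, 7, 6, 9, 0, 16, 11],
  ![10, 1, 8, 4, 17, 7, 15, 12],
  ![11, 4, 15, 16, 18, 9, 0, 5],
  ![13, 11, 9, 16, 5, 17, 7, 18],
  ![8, 11, 15, 18, 9, 7, 5, 12],
  ![9, 15, 6, 1, 14, 17, 18, 12],
  ![6, 0, 8, 12, 4, 3, 16, 17],
  ![13, 6, 14, 12, 3, 17, 1, 16],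
  ![1, 16, 4, 5, 3, 0, 7, 17],
  ![18, 3, 12, 0, 14, 7, 5, 17],
  ![7, 14, 17, 8, 10, 16, 9, 3],
  ![7, 18, 4, 0, 12, 9, 1, 5],
  ![3, 15, 7, 17, 5, 12, 2, 13]]

set_option maxHeartbeats 1000000 in
lemma F_inj : ∀ i : Fin 21, Function.Injective (F i) := by decide

def enc2 : Sym2 (Fin 19) → Nat :=
  Sym2.lift ⟨fun u v => min u.val v.val * 19 + max u.val v.val, by
    intro u v; simp [Nat.min_comm, Nat.max_comm]⟩

lemma enc2_inj : Function.Injective enc2 := by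
  intro e f
  induction e with
  | _ a b =>
    induction f with
    | _ c d =>
      intro h
      simp only [enc2, Sym2.lift_mk] at h
      rw [Sym2.eq_iff]
      have : (a.val = c.val ∧ b.val = d.val) ∨ (a.val = d.val ∧ b.val = c.val) := by
        simp only [Nat.min_def, Nat.max_def] at h; split_ifs at h <;> omega
      rcases this with ⟨h1, h2⟩ | ⟨h1, h2⟩
      · exact Or.inl ⟨Fin.ext h1, Fin.ext h2⟩
      · exact Or.inr ⟨Fin.ext h1, Fin.ext h2⟩

def L (i : Fin 21) : List (Sym2 (Fin 19)) := P8.map (fun p => s(F i p.1, F i p.2))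

def C (i : Fin 21) : List Nat := (L i).map enc2

/-- `K₁₉` minus a triangle on `0,1,2`. -/
def G012 : SimpleGraph (Fin 19) :=
  ⊤ \ SimpleGraph.fromEdgeSet {s(0,1), s(0,2), s(1,2)}

def adjB (x y : Fin 19) : Bool := (x.val != y.val) && !(decide (x.val < 3) && decide (y.val < 3))

lemma adjB_iff (x y : Fin 19) : adjB x y = true ↔ G012.Adj x y := by
  have hx := x.isLt
  have hy := y.isLt
  simp only [adjB, G012, sdiff_adj, top_adj, fromEdgeSet_adj, Set.mem_insert_iff,
    Set.mem_singleton_iff, Sym2.eq_iff, ne_eq, Bool.and_eq_true, bne_iff_ne,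
    Bool.not_eq_true', Bool.and_eq_false_iff, decide_eq_false_iff_not, not_lt,
    Fin.ext_iff, Fin.val_zero, Fin.val_one]
  have h2 : (2 : Fin 19).val = 2 := rfl
  rw [h2]
  omega

lemma G012_mem (x y : Fin 19) (h : s(x,y) ∈ G012.edgeSet) : adjB x y = true :=
  (adjB_iff x y).2 ((SimpleGraph.mem_edgeSet _).1 h)

def chkDisj : Bool := (List.finRange 21).all fun i => (List.finRange 21).all fun j =>
  (i == j) || (C i).all fun x => !((C j).contains x)

def chkCover : Bool := (List.finRange 19).all fun x => (List.finRange 19).all fun y =>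
  !(adjB x y) || (List.finRange 21).any fun i => (C i).contains (enc2 s(x, y))

def chkSub : Bool := (List.finRange 21).all fun i => P8.all fun p => adjB (F i p.1) (F i p.2)

set_option maxHeartbeats 4000000 in
lemma chkDisj_eq : chkDisj = true := by decide

set_option maxHeartbeats 4000000 in
lemma chkCover_eq : chkCover = true := by decide

set_option maxHeartbeats 1000000 in
lemma chkSub_eq : chkSub = true := by decide

def blocks (i : Fin 21) : Set (Sym2 (Fin 19)) := Sym2.map (F i) '' sunlet8.edgeSet

lemma mem_blocks (i : Fin 21) (e : Sym2 (Fin 19)) : e ∈ blocks i ↔ e ∈ L i := by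
  have hL : baseList.map (Sym2.map (F i)) = L i := by
    simp only [baseList, L, List.map_map]
    exact List.map_congr_left fun p _ => Sym2.map_pair_eq _ _ _
  calc e ∈ blocks i ↔ ∃ a, a ∈ baseList ∧ Sym2.map (F i) a = e := by
        simp only [blocks, Set.mem_image, sunlet8_mem]
    _ ↔ e ∈ baseList.map (Sym2.map (F i)) := List.mem_map.symm
    _ ↔ e ∈ L i := by rw [hL]

lemma L_sub (i : Fin 21) (e : Sym2 (Fin 19)) (he : e ∈ L i) : e ∈ G012.edgeSet := by
  rw [L, List.mem_map] at he
  obtain ⟨p, hp, rfl⟩ := he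
  rw [SimpleGraph.mem_edgeSet]
  have h := chkSub_eq
  simp only [chkSub, List.all_eq_true] at h
  exact (adjB_iff _ _).1 (h i (List.mem_finRange i) p hp)

lemma cover (x y : Fin 19) (h : G012.Adj x y) : ∃ i, s(x, y) ∈ L i := by
  have hc := chkCover_eq
  simp only [chkCover, List.all_eq_true, Bool.or_eq_true, Bool.not_eq_true',
    List.any_eq_true] at hc
  rcases hc x (List.mem_finRange x) y (List.mem_finRange y) with hfalse | ⟨i, _, hi⟩
  · rw [(adjB_iff x y).2 h] at hfalse; exact absurd hfalse (by simp)
  · refine ⟨i, ?_⟩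
    rw [List.contains_iff_exists_mem_beq] at hi
    obtain ⟨a, ha, hab⟩ := hi
    have ha' : a = enc2 s(x, y) := by
      have : enc2 s(x, y) = a := by simpa using hab
      exact this.symm
    subst ha'
    rw [C, List.mem_map] at ha
    obtain ⟨e', he', hee⟩ := ha
    rwa [← enc2_inj hee]

lemma L_disj (i j : Fin 21) (hij : i ≠ j) (e : Sym2 (Fin 19)) (hi : e ∈ L i) (hj : e ∈ L j) :
    False := by
  have hd := chkDisj_eq
  simp only [chkDisj, List.all_eq_true, Bool.or_eq_true, beq_iff_eq, Bool.not_eq_true'] at hd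
  rcases hd i (List.mem_finRange i) j (List.mem_finRange j) with h | h
  · exact hij h
  · have hci : enc2 e ∈ C i := by rw [C]; exact List.mem_map_of_mem hi
    have hcj : enc2 e ∈ C j := by rw [C]; exact List.mem_map_of_mem hj
    have := h _ hci
    rw [← Bool.not_eq_true, List.contains_iff_exists_mem_beq] at this
    exact this ⟨enc2 e, hcj, by simp⟩

lemma mainDecomp : HasSunletDecomposition G012 := by
  refine ⟨Set.range blocks, ?_, ?_, ?_⟩
  · ext e
    induction e with
    | _ x y =>
      simp only [Set.mem_sUnion, Set.mem_range]
      constructor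
      · rintro ⟨t, ⟨i, rfl⟩, he⟩
        exact L_sub i _ ((mem_blocks i _).1 he)
      · intro he
        obtain ⟨i, hi⟩ := cover x y ((SimpleGraph.mem_edgeSet _).1 he)
        exact ⟨blocks i, ⟨i, rfl⟩, (mem_blocks i _).2 hi⟩
  · rintro s ⟨i, rfl⟩ t ⟨j, rfl⟩ hst
    have hij : i ≠ j := by rintro rfl; exact hst rfl
    exact Set.disjoint_left.2 fun e hei hej =>
      L_disj i j hij e ((mem_blocks i _).1 hei) ((mem_blocks j _).1 hej)
  · rintro s ⟨i, rfl⟩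
    exact ⟨F i, F_inj i, rfl⟩

lemma transfer {V : Type*} (σ : Equiv.Perm V) (G G' : SimpleGraph V)
    (h : ∀ x y, G'.Adj (σ x) (σ y) ↔ G.Adj x y) :
    HasSunletDecomposition G → HasSunletDecomposition G' := by
  rintro ⟨P, hU, hD, hC⟩
  have hσ : Function.Injective (Sym2.map σ) := Sym2.map.injective σ.injective
  refine ⟨(Set.image (Sym2.map σ)) '' P, ?_, ?_, ?_⟩
  · have hE : Sym2.map σ '' G.edgeSet = G'.edgeSet := by
      ext e
      induction e with
      | _ x y =>
        constructor
        · rintro ⟨e', he', hmap⟩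
          induction e' with
          | _ u v =>
            rw [← hmap, Sym2.map_pair_eq, SimpleGraph.mem_edgeSet]
            exact (h u v).2 ((SimpleGraph.mem_edgeSet _).1 he')
        · intro he
          refine ⟨s(σ.symm x, σ.symm y), ?_, ?_⟩
          · rw [SimpleGraph.mem_edgeSet]
            exact (h _ _).1 (by
              rw [σ.apply_symm_apply, σ.apply_symm_apply]
              exact (SimpleGraph.mem_edgeSet _).1 he)
          · rw [Sym2.map_pair_eq, σ.apply_symm_apply, σ.apply_symm_apply]
    rw [← Set.image_sUnion, hU, hE]
  · rintro s ⟨p, hp, rfl⟩ t ⟨q, hq, rfl⟩ hne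
    have hpq : p ≠ q := by rintro rfl; exact hne rfl
    exact (Set.disjoint_image_iff hσ).2 (hD hp hq hpq)
  · rintro s ⟨p, hp, rfl⟩
    obtain ⟨f, hf, rfl⟩ := hC p hp
    refine ⟨σ ∘ f, σ.injective.comp hf, ?_⟩
    rw [Set.image_image]
    exact Set.image_congr fun e _ => Sym2.map_map e

lemma exists_perm {α : Type*} [DecidableEq α] {x y z a b c : α}
    (hxy : x ≠ y) (hxz : x ≠ z) (hyz : y ≠ z)
    (hab : a ≠ b) (hac : a ≠ c) (hbc : b ≠ c) :
    ∃ σ : Equiv.Perm α, σ x = a ∧ σ y = b ∧ σ z = c := by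
  obtain ⟨b', hb'⟩ : ∃ b', b' = Equiv.swap x a b := ⟨_, rfl⟩
  have hb'x : b' ≠ x := by
    intro h
    apply hab
    have h2 := congrArg (Equiv.swap x a) h.symm
    rwa [hb', Equiv.swap_apply_self, Equiv.swap_apply_left] at h2
  obtain ⟨c', hc'⟩ : ∃ c', c' = Equiv.swap y b' (Equiv.swap x a c) := ⟨_, rfl⟩
  have hkey : Equiv.swap x a (Equiv.swap y b' c') = c := by
    rw [hc', Equiv.swap_apply_self, Equiv.swap_apply_self]
  have hc'x : c' ≠ x := by
    intro h
    rw [h, Equiv.swap_apply_of_ne_of_ne hxy (Ne.symm hb'x),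
      Equiv.swap_apply_left] at hkey
    exact hac hkey
  have hc'y : c' ≠ y := by
    intro h
    rw [h, Equiv.swap_apply_left, hb', Equiv.swap_apply_self] at hkey
    exact hbc hkey
  refine ⟨(Equiv.swap z c').trans ((Equiv.swap y b').trans (Equiv.swap x a)), ?_, ?_, ?_⟩
  · simp only [Equiv.trans_apply]
    rw [Equiv.swap_apply_of_ne_of_ne hxz (Ne.symm hc'x),
      Equiv.swap_apply_of_ne_of_ne hxy (Ne.symm hb'x), Equiv.swap_apply_left]
  · simp only [Equiv.trans_apply]
    rw [Equiv.swap_apply_of_ne_of_ne hyz (Ne.symm hc'y),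
      Equiv.swap_apply_left, hb', Equiv.swap_apply_self]
  · simp only [Equiv.trans_apply]
    rw [Equiv.swap_apply_left]
    exact hkey

theorem stmt_19 (a b c : Fin 19) (hab : a ≠ b) (hac : a ≠ c) (hbc : b ≠ c) :
    HasSunletDecomposition
      ((⊤ : SimpleGraph (Fin 19)) \
        SimpleGraph.fromEdgeSet {s(a, b), s(a, c), s(b, c)}) := by
  obtain ⟨σ, h0, h1, h2⟩ := exists_perm (x := (0 : Fin 19)) (y := 1) (z := 2)
    (by decide) (by decide) (by decide) hab hac hbc
  refine transfer σ G012 _ ?_ mainDecomp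
  intro x y
  have hmapinj : Function.Injective (Sym2.map σ) := Sym2.map.injective σ.injective
  have hpair : ∀ u v u' v' : Fin 19, (s(σ u, σ v) = s(σ u', σ v')) ↔ s(u,v) = s(u',v') := by
    intro u v u' v'
    rw [← Sym2.map_pair_eq σ, ← Sym2.map_pair_eq σ]
    exact hmapinj.eq_iff
  simp only [G012, sdiff_adj, top_adj, fromEdgeSet_adj, Set.mem_insert_iff,
    Set.mem_singleton_iff, ne_eq]
  rw [← h0, ← h1, ← h2, σ.injective.eq_iff, hpair x y 0 1, hpair x y 0 2, hpair x y 1 2]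
end
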